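/- arXiv:1905.02548 — 6 statements merged into one kernel-verified Lean document; each statement's English description precedes it below -/
import Mathlib

section
/- Let D be a finite positive-semidefinite symmetric-matrix-valued Borel measure on R^d (i.e., each component D_{ij} is a finite signed Borel measure, D_{ij} = D_{ji}, and for every vector ξ in R^d the scalar measure (ξ⊗ξ):D = Σ_{i,j} ξ_i ξ_j D_{ij} is a non-negative measure). If ∫_{R^d} ∇φ : dD = 0 for every compactly supported C^1 vector field φ: R^d → R^d, then D ≡ 0. -/
/-!
Test the divergence-free condition against the truncated identity fields `x ↦ θ (r • x) • x`,
where `θ` is a smooth bump equal to `1` near `0`. Their gradients `θ (r x) I + r x ⊗ ∇θ (r x)`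
are bounded uniformly in `r` (the second term lives where `|r x|` is at most the support radius
of `θ`) and tend pointwise to `I` as `r → 0`, so dominated convergence gives
`∑ i, D i i univ = 0`. Positive semidefiniteness makes every `D i i` a nonnegative measure,
hence zero; testing it with `e i ± e j` then gives `D i j + D j i = 0`, and symmetry
gives `D i j = 0`.
-/

open MeasureTheory Filter Topology

/-- Integral of a real function against a signed measure, defined via the
Jordan decomposition. -/
noncomputable def MeasureTheory.SignedMeasure.intg {α : Type*} [MeasurableSpace α]
    (μ : MeasureTheory.SignedMeasure α) (f : α → ℝ) : ℝ :=
  (∫ x, f x ∂μ.toJordanDecomposition.posPart) -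
    (∫ x, f x ∂μ.toJordanDecomposition.negPart)

namespace MeasureTheory.SignedMeasure

variable {α : Type*} [MeasurableSpace α]

theorem intg_const (μ : SignedMeasure α) (c : ℝ) : μ.intg (fun _ => c) = c * μ Set.univ := by
  rw [intg, integral_const, integral_const,
    apply_eq_posPart_real_sub_negPart_real μ MeasurableSet.univ, smul_eq_mul, smul_eq_mul]
  ring

theorem tendsto_intg_of_bounded {ι : Type*} {l : Filter ι} [l.IsCountablyGenerated]
    (μ : SignedMeasure α) {F : ι → α → ℝ} {f : α → ℝ} {C : ℝ}
    (hF_meas : ∀ n, StronglyMeasurable (F n)) (hF_le : ∀ n x, |F n x| ≤ C)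
    (hF_lim : ∀ x, Tendsto (fun n => F n x) l (𝓝 (f x))) :
    Tendsto (fun n => μ.intg (F n)) l (𝓝 (μ.intg f)) := by
  have h_dominated (ν : Measure α) [IsFiniteMeasure ν] :
      Tendsto (fun n => ∫ x, F n x ∂ν) l (𝓝 (∫ x, f x ∂ν)) :=
    tendsto_integral_filter_of_dominated_convergence (fun _ => C)
      (.of_forall fun n => (hF_meas n).aestronglyMeasurable)
      (.of_forall fun n => ae_of_all _ (hF_le n)) (integrable_const C) (ae_of_all _ hF_lim)
  exact (h_dominated _).sub (h_dominated _)

theorem eq_zero_of_nonneg_of_apply_univ_eq_zero {μ : SignedMeasure α}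
    (hμ : ∀ s, MeasurableSet s → 0 ≤ μ s) (huniv : μ Set.univ = 0) : μ = 0 := by
  ext s hs
  have hsplit : μ s + μ sᶜ = μ Set.univ := by
    rw [← VectorMeasure.of_union disjoint_compl_right hs hs.compl, Set.union_compl_self]
  have := hμ s hs
  have := hμ sᶜ hs.compl
  rw [zero_apply]
  linarith

end MeasureTheory.SignedMeasure

section QuadraticForm

variable {ι : Type*} [Fintype ι] [DecidableEq ι]

theorem sum_sum_mul_mul_single_add_smul_single (A : ι → ι → ℝ) (i j : ι) (t : ℝ) :
    ∑ k, ∑ l, (Pi.single i 1 + t • Pi.single j 1 : ι → ℝ) k *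
      (Pi.single i 1 + t • Pi.single j 1 : ι → ℝ) l * A k l =
      A i i + t * (A i j + A j i) + t ^ 2 * A j j := by
  simp only [Pi.add_apply, Pi.smul_apply, Pi.single_apply, smul_eq_mul, add_mul, mul_add,
    Finset.sum_add_distrib, ite_mul, mul_ite, mul_one, mul_zero, one_mul, zero_mul,
    Finset.sum_ite_eq', Finset.mem_univ, if_true]
  ring

theorem diag_nonneg_of_forall_quadratic_nonneg {A : ι → ι → ℝ}
    (hA : ∀ ξ : ι → ℝ, 0 ≤ ∑ k, ∑ l, ξ k * ξ l * A k l) (i : ι) : 0 ≤ A i i := by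
  have h := hA (Pi.single i 1 + (0 : ℝ) • Pi.single i 1)
  rw [sum_sum_mul_mul_single_add_smul_single] at h
  simpa using h

theorem add_eq_zero_of_forall_quadratic_nonneg {A : ι → ι → ℝ}
    (hA : ∀ ξ : ι → ℝ, 0 ≤ ∑ k, ∑ l, ξ k * ξ l * A k l) {i j : ι}
    (hi : A i i = 0) (hj : A j j = 0) : A i j + A j i = 0 := by
  have hplus := hA (Pi.single i 1 + (1 : ℝ) • Pi.single j 1)
  have hminus := hA (Pi.single i 1 + (-1 : ℝ) • Pi.single j 1)
  rw [sum_sum_mul_mul_single_add_smul_single, hi, hj] at hplus hminus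
  linarith

end QuadraticForm

namespace ContDiffBump

variable {E : Type*} [NormedAddCommGroup E] [NormedSpace ℝ E] [HasContDiffBump E]
  (θ : ContDiffBump (0 : E))

noncomputable def truncatedId (r : ℝ) (x : E) : E := θ (r • x) • x

theorem contDiff_truncatedId {n : ℕ∞} (r : ℝ) : ContDiff ℝ n (θ.truncatedId r) :=
  (θ.contDiff.comp (contDiff_const_smul r)).smul contDiff_id

theorem hasCompactSupport_truncatedId [FiniteDimensional ℝ E] {r : ℝ} (hr : r ≠ 0) :
    HasCompactSupport (θ.truncatedId r) :=
  (θ.hasCompactSupport.comp_homeomorph (Homeomorph.smulOfNeZero r hr)).smul_right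

theorem hasFDerivAt_truncatedId (r : ℝ) (x : E) :
    HasFDerivAt (θ.truncatedId r)
      (θ (r • x) • ContinuousLinearMap.id ℝ E + (r • fderiv ℝ θ (r • x)).smulRight x) x := by
  have hθ : HasFDerivAt (fun y : E => θ (r • y)) (r • fderiv ℝ θ (r • x)) x :=
    ((θ.contDiff.differentiable (n := 1) one_ne_zero (r • x)).hasFDerivAt.comp x
      ((hasFDerivAt_id x).const_smul r)).congr_fderiv (by ext v; simp)
  exact hθ.smul (hasFDerivAt_id x)

theorem exists_norm_fderiv_truncatedId_le [FiniteDimensional ℝ E] :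
    ∃ C, ∀ r x, ‖fderiv ℝ (θ.truncatedId r) x‖ ≤ C := by
  -- `‖fderiv θ y‖ * ‖y‖` is continuous with compact support, and bounds the `r`-dependent term.
  obtain ⟨K, hK⟩ := (θ.hasCompactSupport.fderiv (𝕜 := ℝ)).norm.mul_right.exists_bound_of_continuous
    ((θ.contDiff.continuous_fderiv one_ne_zero).norm.mul continuous_norm)
  refine ⟨1 + K, fun r x => ?_⟩
  rw [(θ.hasFDerivAt_truncatedId r x).fderiv]
  calc _ ≤ ‖θ (r • x) • ContinuousLinearMap.id ℝ E‖ + ‖(r • fderiv ℝ θ (r • x)).smulRight x‖ :=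
        norm_add_le _ _
    _ ≤ 1 + ‖fderiv ℝ θ (r • x)‖ * ‖r • x‖ := by
        gcongr
        · rw [norm_smul, Real.norm_of_nonneg θ.nonneg]
          exact mul_le_one₀ θ.le_one (norm_nonneg _) ContinuousLinearMap.norm_id_le
        · rw [ContinuousLinearMap.norm_smulRight_apply, norm_smul, norm_smul]
          exact le_of_eq (by ring)
    _ ≤ 1 + K := by
        gcongr
        exact (le_abs_self _).trans (hK (r • x))

theorem eventually_fderiv_truncatedId_eq_id (x : E) :
    ∀ᶠ r in 𝓝 0, fderiv ℝ (θ.truncatedId r) x = ContinuousLinearMap.id ℝ E := by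
  have hball : ∀ᶠ r in 𝓝 (0 : ℝ), r • x ∈ Metric.ball (0 : E) θ.rIn :=
    ((continuous_id.smul continuous_const).tendsto' 0 0 (zero_smul ℝ x)).eventually
      (Metric.isOpen_ball.mem_nhds (Metric.mem_ball_self θ.rIn_pos))
  filter_upwards [hball] with r hr
  have hone : θ =ᶠ[𝓝 (r • x)] fun _ => 1 :=
    Metric.isOpen_ball.eventually_mem hr |>.mono fun y hy =>
      θ.one_of_mem_closedBall (Metric.ball_subset_closedBall hy)
  rw [(θ.hasFDerivAt_truncatedId r x).fderiv, hone.eq_of_nhds, hone.fderiv_eq]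
  simp

variable [FiniteDimensional ℝ E] [MeasurableSpace E] [OpensMeasurableSpace E]

theorem tendsto_intg_apply_fderiv_truncatedId (μ : SignedMeasure E) (ℓ : StrongDual ℝ E) (v : E) :
    Tendsto (fun r => μ.intg fun x => ℓ (fderiv ℝ (θ.truncatedId r) x v)) (𝓝 0)
      (𝓝 (ℓ v * μ Set.univ)) := by
  obtain ⟨C, hC⟩ := θ.exists_norm_fderiv_truncatedId_le
  rw [← μ.intg_const]
  refine μ.tendsto_intg_of_bounded (C := ‖ℓ‖ * (C * ‖v‖)) (fun r => ?_) (fun r x => ?_)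
    (fun x => ?_)
  · exact (ℓ.continuous.comp (((θ.contDiff_truncatedId r).continuous_fderiv
      one_ne_zero).clm_apply continuous_const)).stronglyMeasurable
  · rw [← Real.norm_eq_abs]
    refine (ℓ.le_opNorm _).trans (mul_le_mul_of_nonneg_left ?_ (norm_nonneg ℓ))
    exact (ContinuousLinearMap.le_opNorm _ v).trans
      (mul_le_mul_of_nonneg_right (hC r x) (norm_nonneg v))
  · refine tendsto_const_nhds.congr' ?_
    filter_upwards [θ.eventually_fderiv_truncatedId_eq_id x] with r hr
    rw [hr, ContinuousLinearMap.id_apply]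

end ContDiffBump

theorem sum_apply_univ_eq_zero_of_forall_sum_intg_fderiv_eq_zero {d : ℕ}
    (D : Fin d → Fin d → SignedMeasure (EuclideanSpace ℝ (Fin d)))
    (hdiv : ∀ φ : EuclideanSpace ℝ (Fin d) → EuclideanSpace ℝ (Fin d),
      ContDiff ℝ 1 φ → HasCompactSupport φ →
      ∑ i, ∑ j,
        (D i j).intg (fun x => fderiv ℝ φ x (EuclideanSpace.single j (1 : ℝ)) i) = 0) :
    ∑ i, D i i Set.univ = 0 := by
  let θ : ContDiffBump (0 : EuclideanSpace ℝ (Fin d)) := ⟨1, 2, one_pos, one_lt_two⟩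
  have hlim : Tendsto (fun r => ∑ i, ∑ j,
      (D i j).intg (fun x => fderiv ℝ (θ.truncatedId r) x (EuclideanSpace.single j 1) i))
      (𝓝[≠] 0) (𝓝 (∑ i, ∑ j, EuclideanSpace.single j (1 : ℝ) i * D i j Set.univ)) :=
    tendsto_finsetSum _ fun i _ => tendsto_finsetSum _ fun j _ =>
      (θ.tendsto_intg_apply_fderiv_truncatedId (D i j) (EuclideanSpace.proj i) _).mono_left
        nhdsWithin_le_nhds
  have hzero : ∀ᶠ r in 𝓝[≠] (0 : ℝ), ∑ i, ∑ j,
      (D i j).intg (fun x => fderiv ℝ (θ.truncatedId r) x (EuclideanSpace.single j 1) i) = 0 :=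
    eventually_nhdsWithin_of_forall fun r hr =>
      hdiv _ (θ.contDiff_truncatedId r) (θ.hasCompactSupport_truncatedId hr)
  have htrace := tendsto_nhds_unique (hlim.congr' hzero) tendsto_const_nhds
  simpa [PiLp.single_apply] using htrace

/-- If a finite, symmetric, positive-semidefinite matrix-valued Borel measure `D` on `ℝ^d`
is divergence-free in the sense of distributions (tested against compactly supported `C¹`
vector fields), then `D ≡ 0`. -/
theorem divergence_free_psd_matrix_measure_eq_zero
    (d : ℕ) (D : Fin d → Fin d → MeasureTheory.SignedMeasure (EuclideanSpace ℝ (Fin d)))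
    (hsym : ∀ i j, D i j = D j i)
    (hpsd : ∀ (ξ : Fin d → ℝ) (s : Set (EuclideanSpace ℝ (Fin d))), MeasurableSet s →
      0 ≤ ∑ i, ∑ j, ξ i * ξ j * (D i j) s)
    (hdiv : ∀ φ : EuclideanSpace ℝ (Fin d) → EuclideanSpace ℝ (Fin d),
      ContDiff ℝ 1 φ → HasCompactSupport φ →
      ∑ i, ∑ j,
        (D i j).intg (fun x => fderiv ℝ φ x (EuclideanSpace.single j (1 : ℝ)) i) = 0) :
    ∀ i j, D i j = 0 := by
  have hdiag_nonneg (i : Fin d) (s : Set (EuclideanSpace ℝ (Fin d))) (hs : MeasurableSet s) :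
      0 ≤ D i i s :=
    diag_nonneg_of_forall_quadratic_nonneg (hpsd · s hs) i
  have hdiag (i : Fin d) : D i i = 0 := by
    have htrace := sum_apply_univ_eq_zero_of_forall_sum_intg_fderiv_eq_zero D hdiv
    rw [Finset.sum_eq_zero_iff_of_nonneg fun i _ => hdiag_nonneg i _ .univ] at htrace
    exact SignedMeasure.eq_zero_of_nonneg_of_apply_univ_eq_zero (hdiag_nonneg i)
      (htrace i (Finset.mem_univ i))
  intro i j
  ext s hs
  have hpolar := add_eq_zero_of_forall_quadratic_nonneg (hpsd · s hs) (i := i) (j := j)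
    (by simp [hdiag]) (by simp [hdiag])
  rw [hsym j i] at hpolar
  rw [zero_apply]
  linarith
end

section
/- Let E: R^m → [0,∞] be a lower semicontinuous convex function that is strictly convex on its domain of positivity (if 0 < E(y₁) < ∞, E(y₂) < ∞, y₁ ≠ y₂, then E((y₁+y₂)/2) < (E(y₁)+E(y₂))/2), and such that E(y) = 0 for every y in Dom(E) ∩ ∂Dom(E). Let ν be a Borel probability measure on R^m with finite first moment satisfying E(∫ y dν(y)) = ∫ E(y) dν(y) < ∞. Then either (i) ν is the Dirac mass at Y = ∫ y dν(y) and E(Y) > 0, or (ii) ν is supported in the zero set {y : E(y) = 0}. -/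
/-!
If `E Y = 0`, then `∫⁻ E dν = 0` forces `E = 0` ν-a.e. Otherwise `Y` lies in `Dom(E)` but not on
its boundary, hence in its interior, where the real convex function `(E ·).toReal` has a supporting
affine minorant `g` with `g Y = E Y` (Hahn–Banach, separating `(Y, E Y)` from the open strict
epigraph over the interior). Jensen equality gives `∫ (E - g) dν = 0` with `E - g ≥ 0`, so `E = g`
ν-a.e.; then `E` is affine on the segment from `Y` to ν-almost every `y`, which strict convexity
at the midpoint forbids unless `y = Y`.
-/

open MeasureTheory
open scoped ENNReal

theorem convexOn_toReal_of_le_ofReal_mul_add {W : Type*} [AddCommGroup W] [Module ℝ W]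
    {E : W → ℝ≥0∞} (hconv : ∀ (y z : W) (a b : ℝ), 0 ≤ a → 0 ≤ b → a + b = 1 →
      E (a • y + b • z) ≤ ENNReal.ofReal a * E y + ENNReal.ofReal b * E z) :
    ConvexOn ℝ {y | E y ≠ ⊤} (fun y => (E y).toReal) := by
  have hbound {y z : W} (hy : E y ≠ ⊤) (hz : E z ≠ ⊤) (a b : ℝ) :
      ENNReal.ofReal a * E y + ENNReal.ofReal b * E z ≠ ⊤ := by
    finiteness
  refine ⟨fun y hy z hz a b ha hb hab => ne_top_of_le_ne_top (hbound hy hz a b)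
    (hconv y z a b ha hb hab), fun y hy z hz a b ha hb hab => ?_⟩
  have := ENNReal.toReal_mono (hbound hy hz a b) (hconv y z a b ha hb hab)
  rwa [ENNReal.toReal_add (by finiteness) (by finiteness), ENNReal.toReal_mul, ENNReal.toReal_mul,
    ENNReal.toReal_ofReal ha, ENNReal.toReal_ofReal hb] at this

section

variable {V : Type*} [NormedAddCommGroup V] [NormedSpace ℝ V] [FiniteDimensional ℝ V]
  {s : Set V} {f : V → ℝ}

theorem ConvexOn.isOpen_strict_epigraph_interior (hf : ConvexOn ℝ s f) :
    IsOpen {p : V × ℝ | p.1 ∈ interior s ∧ f p.1 < p.2} := by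
  have hcont : ContinuousOn (fun p : V × ℝ => f p.1 - p.2) (interior s ×ˢ Set.univ) :=
    (hf.continuousOn_interior.comp continuousOn_fst fun _ hp => hp.1).sub continuousOn_snd
  convert hcont.isOpen_inter_preimage (isOpen_interior.prod isOpen_univ) (isOpen_Iio (a := 0))
    using 1
  ext p
  simp

theorem ConvexOn.exists_affine_le_on_interior (hf : ConvexOn ℝ s f) {x : V}
    (hx : x ∈ interior s) : ∃ L : V →L[ℝ] ℝ, ∀ z ∈ interior s, f x + L (z - x) ≤ f z := by
  have hfi : ConvexOn ℝ (interior s) f := hf.subset interior_subset hf.1.interior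
  obtain ⟨φ, hφ⟩ := geometric_hahn_banach_open_point hfi.convex_strict_epigraph
    hf.isOpen_strict_epigraph_interior (x := (x, f x)) (by simp)
  set ℓ := φ.comp (ContinuousLinearMap.inl ℝ V ℝ)
  set r := φ (0, 1)
  have hφ_apply (y : V) (t : ℝ) : φ (y, t) = ℓ y + t * r := by
    have : ((y, t) : V × ℝ) = (y, 0) + t • (0, 1) := by ext <;> simp
    rw [this, map_add, map_smul, smul_eq_mul]
    rfl
  have hr : 0 < -r := by
    have := hφ (x, f x + 1) ⟨hx, lt_add_one _⟩
    rw [hφ_apply, hφ_apply] at this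
    linarith
  -- `φ (z, ·)` stays below `φ (x, f x)` on `(f z, ∞)`, hence also at its endpoint.
  have hsupport {z : V} (hz : z ∈ interior s) : ℓ z + f z * r ≤ ℓ x + f x * r := by
    have hcl : IsClosed {t : ℝ | ℓ z + t * r ≤ ℓ x + f x * r} :=
      isClosed_le (by fun_prop) continuous_const
    refine hcl.closure_subset_iff.2 (fun t ht => ?_) (closure_Ioi (f z) ▸ Set.self_mem_Ici)
    have := hφ (z, t) ⟨hz, ht⟩
    rw [hφ_apply, hφ_apply] at this
    exact this.le
  refine ⟨(-r)⁻¹ • ℓ, fun z hz => ?_⟩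
  have key : (-r)⁻¹ * (ℓ z - ℓ x) ≤ f z - f x := by
    rw [inv_mul_le_iff₀ hr]
    linarith [hsupport hz]
  simp only [smul_apply, map_sub, smul_eq_mul]
  linarith

theorem ConvexOn.exists_affine_le_of_mem_interior (hf : ConvexOn ℝ s f) {x : V}
    (hx : x ∈ interior s) : ∃ L : V →L[ℝ] ℝ, ∀ y ∈ s, f x + L (y - x) ≤ f y := by
  obtain ⟨L, hL⟩ := hf.exists_affine_le_on_interior hx
  refine ⟨L, fun y hy => ?_⟩
  have hmid : (2⁻¹ : ℝ) • x + (2⁻¹ : ℝ) • y ∈ interior s :=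
    hf.1.combo_interior_self_mem_interior hx hy (by norm_num) (by norm_num) (by norm_num)
  have hconv := hf.2 (interior_subset hx) hy (by norm_num : (0 : ℝ) ≤ 2⁻¹)
    (by norm_num : (0 : ℝ) ≤ 2⁻¹) (by norm_num)
  have hmid_le := hL _ hmid
  have : (2⁻¹ : ℝ) • x + (2⁻¹ : ℝ) • y - x = (2⁻¹ : ℝ) • (y - x) := by module
  rw [this, map_smul, smul_eq_mul] at hmid_le
  simp only [smul_eq_mul] at hconv
  linarith

theorem ConvexOn.ae_midpoint_le_of_integral_eq [MeasurableSpace V] {μ : Measure V}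
    [IsProbabilityMeasure μ] (hf : ConvexOn ℝ s f) (hbar : ∫ y, y ∂μ ∈ interior s)
    (hs : ∀ᵐ y ∂μ, y ∈ s) (hid : Integrable (fun y => y) μ) (hfi : Integrable f μ)
    (heq : ∫ y, f y ∂μ = f (∫ y, y ∂μ)) :
    ∀ᵐ y ∂μ, (f (∫ y, y ∂μ) + f y) / 2 ≤ f ((2⁻¹ : ℝ) • (∫ y, y ∂μ + y)) := by
  set x := ∫ y, y ∂μ
  obtain ⟨L, hL⟩ := hf.exists_affine_le_of_mem_interior hbar
  set g : V → ℝ := fun y => f x + L (y - x)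
  have hsub : Integrable (fun y => y - x) μ := hid.sub (integrable_const x)
  have hgi : Integrable g μ := (integrable_const _).add (L.integrable_comp hsub)
  have hg : ∫ y, g y ∂μ = f x := by
    rw [integral_add (integrable_const _) (L.integrable_comp hsub), L.integral_comp_comm hsub,
      integral_sub hid (integrable_const x)]
    simp [x]
  have hfg : f =ᵐ[μ] g := by
    have hnn : 0 ≤ᵐ[μ] f - g := hs.mono fun y hy => sub_nonneg.2 (hL y hy)
    have hzero := (integral_eq_zero_iff_of_nonneg_ae hnn (hfi.sub hgi)).1 (by
      rw [integral_sub' hfi hgi, heq, hg, sub_self])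
    filter_upwards [hzero] with y hy
    exact sub_eq_zero.1 hy
  filter_upwards [hfg, hs] with y hfy hy
  have hz : (2⁻¹ : ℝ) • (x + y) ∈ s := by
    rw [smul_add]
    exact hf.1 (interior_subset hbar) hy (by norm_num) (by norm_num) (by norm_num)
  have hzx : (2⁻¹ : ℝ) • (x + y) - x = (2⁻¹ : ℝ) • (y - x) := by module
  calc (f x + f y) / 2 = g ((2⁻¹ : ℝ) • (x + y)) := by
        simp only [hfy, g, hzx, map_smul, smul_eq_mul]
        ring
    _ ≤ f _ := hL _ hz

end

/-- **Sharp form of Jensen's inequality.**  Let `E : ℝ^m → [0,∞]` be lower semicontinuous,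
convex, strictly convex on its domain of positivity, and vanishing on
`Dom(E) ∩ ∂Dom(E)`.  If a Borel probability measure `ν` with finite first moment satisfies
`E(∫ y dν) = ∫ E dν < ∞`, then either `ν` is the Dirac mass at the barycenter `Y` with
`E(Y) > 0`, or `ν` is supported in the zero set of `E`. -/
theorem sharp_jensen
    (m : ℕ) (E : EuclideanSpace ℝ (Fin m) → ℝ≥0∞)
    (hconv : ∀ (y z : EuclideanSpace ℝ (Fin m)) (a b : ℝ), 0 ≤ a → 0 ≤ b → a + b = 1 →
      E (a • y + b • z) ≤ ENNReal.ofReal a * E y + ENNReal.ofReal b * E z)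
    (hlsc : LowerSemicontinuous E)
    (hstrict : ∀ y₁ y₂ : EuclideanSpace ℝ (Fin m), 0 < E y₁ → E y₁ ≠ ⊤ → E y₂ ≠ ⊤ →
      y₁ ≠ y₂ → E ((2 : ℝ)⁻¹ • (y₁ + y₂)) < (E y₁ + E y₂) / 2)
    (hbdry : ∀ y ∈ {y | E y ≠ ⊤} ∩ frontier {y | E y ≠ ⊤}, E y = 0)
    (ν : Measure (EuclideanSpace ℝ (Fin m))) [IsProbabilityMeasure ν]
    (hmom : Integrable (fun y => y) ν)
    (Y : EuclideanSpace ℝ (Fin m)) (hY : Y = ∫ y, y ∂ν)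
    (hfin : ∫⁻ y, E y ∂ν ≠ ⊤)
    (heq : E Y = ∫⁻ y, E y ∂ν) :
    (ν = Measure.dirac Y ∧ 0 < E Y) ∨ ν {y | E y ≠ 0} = 0 := by
  have hEmeas : Measurable E := hlsc.measurable
  rcases (zero_le : 0 ≤ E Y).eq_or_lt with h0 | hpos
  · right
    have hae : ∀ᵐ y ∂ν, E y = 0 := (lintegral_eq_zero_iff hEmeas).1 (heq ▸ h0.symm)
    simpa [ae_iff] using hae
  refine .inl ⟨?_, hpos⟩
  have hYfin : E Y ≠ ⊤ := heq ▸ hfin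
  have hYint : Y ∈ interior {y | E y ≠ ⊤} := by
    by_contra h
    exact hpos.ne' (hbdry Y ⟨hYfin, subset_closure hYfin, h⟩)
  have hae_fin : ∀ᵐ y ∂ν, E y ≠ ⊤ := (ae_lt_top hEmeas hfin).mono fun _ => ne_of_lt
  have hint : ∫ y, (E y).toReal ∂ν = (E Y).toReal := by
    rw [integral_toReal hEmeas.aemeasurable (ae_lt_top hEmeas hfin), heq]
  have hmid := (convexOn_toReal_of_le_ofReal_mul_add hconv).ae_midpoint_le_of_integral_eq
    (hY ▸ hYint) hae_fin hmom (integrable_toReal_of_lintegral_ne_top hEmeas.aemeasurable hfin)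
    (hY ▸ hint)
  rw [← hY] at hmid
  have hdirac : ∀ᵐ y ∂ν, y = Y := by
    filter_upwards [hmid, hae_fin] with y hy hyfin
    by_contra hne
    have hlt := ENNReal.toReal_strict_mono (by finiteness)
      (hstrict Y y hpos hYfin hyfin (Ne.symm hne))
    rw [ENNReal.toReal_div, ENNReal.toReal_add hYfin hyfin] at hlt
    exact (hy.trans_lt hlt).false
  calc ν = ν.map id := Measure.map_id.symm
    _ = ν.map (fun _ => Y) := Measure.map_congr hdirac
    _ = Measure.dirac Y := by simp [Measure.map_const]
end

section
/- The function E(ρ, m, S) defined on R × R^d × R by E = |m|²/(2ρ) + ρ^γ exp(S/(c_v ρ)) for ρ > 0, E = 0 for ρ = 0, m = 0, S ≤ 0, and E = ∞ otherwise, is a lower semicontinuous function of (ρ, m, S), where γ > 1 and c_v = 1/(γ−1). -/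
/-!
On `ρ > 0` the energy is a continuous real function, and for `ρ < 0` it is identically `∞`, so
only the vacuum `ρ = 0` needs an argument. There the energy is `0` (nothing to prove) unless
`m ≠ 0` or `S > 0`, and then it blows up as `ρ → 0⁺`: the kinetic part `|m|²/(2ρ)` does if
`m ≠ 0`, and the internal part `ρ^γ exp(S(γ-1)/ρ)` does if `S > 0` (exponential beats power),
uniformly for `(m, S)` near the limit. So the energy is continuous in `ℝ≥0∞` at every point
where it is `∞`.
-/

open Filter Topology Real
open scoped ENNReal

lemma tendsto_rpow_mul_exp_div_nhdsGT_zero (γ : ℝ) {c : ℝ} (hc : 0 < c) :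
    Tendsto (fun ρ : ℝ => ρ ^ γ * exp (c / ρ)) (𝓝[>] 0) atTop := by
  have hinv : Tendsto (fun ρ : ℝ => c / ρ) (𝓝[>] 0) atTop := by
    simpa only [div_eq_mul_inv] using tendsto_inv_nhdsGT_zero.const_mul_atTop hc
  refine (((tendsto_exp_div_rpow_atTop γ).comp hinv).const_mul_atTop
    (rpow_pos_of_pos hc γ)).congr' ?_
  filter_upwards [self_mem_nhdsWithin] with ρ (hρ : 0 < ρ)
  have hcγ := (rpow_pos_of_pos hc γ).ne'
  have hργ := (rpow_pos_of_pos hρ γ).ne'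
  rw [Function.comp_apply, div_rpow hc.le hρ.le]
  field_simp

lemma tendsto_ite_pos_ofReal_nhds_top {φ : ℝ → ℝ} (hφ : Tendsto φ (𝓝[>] 0) atTop) :
    Tendsto (fun ρ : ℝ => if 0 < ρ then ENNReal.ofReal (φ ρ) else ⊤) (𝓝 0) (𝓝 ⊤) := by
  rw [← nhdsLE_sup_nhdsGT, tendsto_sup]
  constructor
  · refine tendsto_const_nhds.congr' ?_
    filter_upwards [self_mem_nhdsWithin] with ρ (hρ : ρ ≤ 0)
    rw [if_neg hρ.not_gt]
  · refine (ENNReal.tendsto_ofReal_atTop.comp hφ).congr' ?_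
    filter_upwards [self_mem_nhdsWithin] with ρ (hρ : 0 < ρ)
    rw [if_pos hρ, Function.comp_apply]

namespace PolytropicEuler

variable {E : Type*} [NormedAddCommGroup E] {γ : ℝ} {p : ℝ × E × ℝ}

noncomputable def energyDensity (γ : ℝ) (p : ℝ × E × ℝ) : ℝ :=
  ‖p.2.1‖ ^ 2 / (2 * p.1) + p.1 ^ γ * exp (p.2.2 * (γ - 1) / p.1)

lemma kinetic_le_energyDensity (hρ : 0 < p.1) : ‖p.2.1‖ ^ 2 / (2 * p.1) ≤ energyDensity γ p :=
  le_add_of_nonneg_right (by positivity)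

lemma internal_le_energyDensity (hρ : 0 < p.1) :
    p.1 ^ γ * exp (p.2.2 * (γ - 1) / p.1) ≤ energyDensity γ p :=
  le_add_of_nonneg_left (by positivity)

lemma continuousAt_energyDensity (hρ : 0 < p.1) : ContinuousAt (energyDensity γ) p := by
  have hpow : ContinuousAt (fun q : ℝ × E × ℝ => q.1 ^ γ) p :=
    (continuousAt_rpow_const _ _ (Or.inl hρ.ne')).comp continuous_fst.continuousAt
  have hexp : ContinuousAt (fun q : ℝ × E × ℝ => exp (q.2.2 * (γ - 1) / q.1)) p :=
    continuous_exp.continuousAt.comp (ContinuousAt.div (by fun_prop) (by fun_prop) hρ.ne')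
  exact (ContinuousAt.div (by fun_prop) (by fun_prop) (by positivity)).add (hpow.mul hexp)

variable [DecidableEq E]

noncomputable def energy (γ : ℝ) (p : ℝ × E × ℝ) : ℝ≥0∞ :=
  if 0 < p.1 then ENNReal.ofReal (energyDensity γ p)
  else if p.1 = 0 ∧ p.2.1 = 0 ∧ p.2.2 ≤ 0 then 0 else ⊤

lemma energy_of_pos (hρ : 0 < p.1) : energy γ p = ENNReal.ofReal (energyDensity γ p) :=
  if_pos hρ

lemma energy_of_vacuum (hρ : p.1 = 0) (hm : p.2.1 = 0) (hS : p.2.2 ≤ 0) : energy γ p = 0 := by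
  rw [energy, if_neg hρ.not_gt, if_pos ⟨hρ, hm, hS⟩]

lemma energy_of_neg (hρ : p.1 < 0) : energy γ p = ⊤ := by
  rw [energy, if_neg hρ.not_gt, if_neg fun h => hρ.ne h.1]

lemma energy_of_nonpos (hρ : p.1 ≤ 0) (h : p.2.1 ≠ 0 ∨ 0 < p.2.2) : energy γ p = ⊤ := by
  rw [energy, if_neg hρ.not_gt, if_neg]
  rintro ⟨-, hm, hS⟩
  rcases h with h | h
  exacts [h hm, h.not_ge hS]

lemma continuousAt_energy_of_pos (hρ : 0 < p.1) : ContinuousAt (energy γ) p := by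
  refine (ENNReal.continuous_ofReal.continuousAt.comp
    (continuousAt_energyDensity (γ := γ) hρ)).congr ?_
  filter_upwards [continuous_fst.continuousAt.eventually_const_lt hρ] with q hq
  exact (energy_of_pos hq).symm

lemma continuousAt_energy_of_neg (hρ : p.1 < 0) : ContinuousAt (energy γ) p := by
  refine (continuousAt_const : ContinuousAt (fun _ => ⊤) p).congr ?_
  filter_upwards [continuous_fst.continuousAt.eventually_lt_const hρ] with q hq
  exact (energy_of_neg hq).symm

lemma tendsto_energy_nhds_top {φ : ℝ → ℝ} (hφ : Tendsto φ (𝓝[>] 0) atTop) (hρ : p.1 = 0)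
    (hnonvac : ∀ᶠ q in 𝓝 p, q.2.1 ≠ 0 ∨ 0 < q.2.2)
    (hbound : ∀ᶠ q in 𝓝 p, 0 < q.1 → φ q.1 ≤ energyDensity γ q) :
    Tendsto (energy γ) (𝓝 p) (𝓝 ⊤) := by
  have hfst : Tendsto (fun q : ℝ × E × ℝ => q.1) (𝓝 p) (𝓝 0) := hρ ▸ continuous_fst.continuousAt
  refine tendsto_nhds_top_mono ((tendsto_ite_pos_ofReal_nhds_top hφ).comp hfst) ?_
  filter_upwards [hnonvac, hbound] with q hq hqφ
  by_cases hqρ : 0 < q.1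
  · rw [Function.comp_apply, if_pos hqρ, energy_of_pos hqρ]
    exact ENNReal.ofReal_le_ofReal (hqφ hqρ)
  · rw [energy_of_nonpos (not_lt.1 hqρ) hq]
    exact le_top

lemma tendsto_energy_nhds_top_of_momentum_ne_zero (hρ : p.1 = 0) (hm : p.2.1 ≠ 0) :
    Tendsto (energy γ) (𝓝 p) (𝓝 ⊤) := by
  set k := ‖p.2.1‖ / 2
  have hk : 0 < k := by positivity
  have hnear : ∀ᶠ q in 𝓝 p, k < ‖q.2.1‖ :=
    continuous_snd.fst.norm.continuousAt.eventually_const_lt (half_lt_self (norm_pos_iff.2 hm))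
  have hφ : Tendsto (fun ρ : ℝ => k ^ 2 / 2 * ρ⁻¹) (𝓝[>] 0) atTop :=
    tendsto_inv_nhdsGT_zero.const_mul_atTop (by positivity)
  refine tendsto_energy_nhds_top hφ hρ ?_ ?_ <;> filter_upwards [hnear] with q hq
  · exact Or.inl (norm_pos_iff.1 (hk.trans hq))
  · intro hqρ
    calc k ^ 2 / 2 * q.1⁻¹ = k ^ 2 / (2 * q.1) := by field_simp
      _ ≤ ‖q.2.1‖ ^ 2 / (2 * q.1) := by gcongr
      _ ≤ energyDensity γ q := kinetic_le_energyDensity hqρ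

lemma tendsto_energy_nhds_top_of_entropy_pos (hγ : 1 < γ) (hρ : p.1 = 0) (hS : 0 < p.2.2) :
    Tendsto (energy γ) (𝓝 p) (𝓝 ⊤) := by
  set s := p.2.2 / 2
  have hnear : ∀ᶠ q in 𝓝 p, s < q.2.2 :=
    continuous_snd.snd.continuousAt.eventually_const_lt (half_lt_self hS)
  have hφ := tendsto_rpow_mul_exp_div_nhdsGT_zero γ (mul_pos (half_pos hS) (sub_pos.2 hγ))
  refine tendsto_energy_nhds_top hφ hρ ?_ ?_ <;> filter_upwards [hnear] with q hq
  · exact Or.inr ((half_pos hS).trans hq)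
  · intro hqρ
    calc q.1 ^ γ * exp (s * (γ - 1) / q.1) ≤ q.1 ^ γ * exp (q.2.2 * (γ - 1) / q.1) := by
          gcongr
      _ ≤ energyDensity γ q := internal_le_energyDensity hqρ

lemma continuousAt_energy_of_blowup (hγ : 1 < γ) (hρ : p.1 = 0) (h : p.2.1 ≠ 0 ∨ 0 < p.2.2) :
    ContinuousAt (energy γ) p := by
  rw [ContinuousAt, energy_of_nonpos hρ.le h]
  rcases h with hm | hS
  · exact tendsto_energy_nhds_top_of_momentum_ne_zero hρ hm
  · exact tendsto_energy_nhds_top_of_entropy_pos hγ hρ hS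

end PolytropicEuler

open PolytropicEuler in
/-- The total energy `E(ρ, m, S)` of the complete polytropic Euler system, equal to
`|m|²/(2ρ) + ρ^γ exp(S/(c_v ρ))` for `ρ > 0` (with `c_v = 1/(γ−1)`, so `S/(c_v ρ) = S(γ−1)/ρ`),
to `0` for `ρ = 0, m = 0, S ≤ 0`, and to `∞` otherwise, is a lower semicontinuous function
of `(ρ, m, S)`. -/
theorem total_energy_lowerSemicontinuous (d : ℕ) (γ : ℝ) (hγ : 1 < γ) :
    LowerSemicontinuous (fun p : ℝ × EuclideanSpace ℝ (Fin d) × ℝ =>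
      if 0 < p.1 then
        ENNReal.ofReal (‖p.2.1‖ ^ 2 / (2 * p.1) +
          p.1 ^ γ * Real.exp (p.2.2 * (γ - 1) / p.1))
      else if p.1 = 0 ∧ p.2.1 = 0 ∧ p.2.2 ≤ 0 then (0 : ℝ≥0∞) else (⊤ : ℝ≥0∞)) := by
  change LowerSemicontinuous (energy (E := EuclideanSpace ℝ (Fin d)) γ)
  intro p
  rcases lt_trichotomy p.1 0 with hneg | hvac | hpos
  · exact (continuousAt_energy_of_neg hneg).lowerSemicontinuousAt
  · by_cases hzero : p.2.1 = 0 ∧ p.2.2 ≤ 0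
    · intro y hy
      simp [energy_of_vacuum hvac hzero.1 hzero.2] at hy
    · rw [not_and_or, not_le] at hzero
      exact (continuousAt_energy_of_blowup hγ hvac hzero).lowerSemicontinuousAt
  · exact (continuousAt_energy_of_pos hpos).lowerSemicontinuousAt
end

section
/- Let P(ρ) = (a/(γ−1)) ρ^γ with a > 0, γ > 1, and let ρ_∞ > 0. Then the relative internal energy ρ ↦ P(ρ) − P'(ρ_∞)(ρ − ρ_∞) − P(ρ_∞) is non-negative for ρ ≥ 0, vanishes only at ρ = ρ_∞, and satisfies: it is bounded below by a positive constant times (ρ − ρ_∞)² for ρ in the interval [ρ_∞/2, 2ρ_∞], and bounded below by a positive constant times (1 + ρ^γ) for ρ outside that interval. -/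
/-!
`F` is the Bregman divergence of the convex potential `P` at `ρ_∞`, so it is non-negative by the
tangent line inequality. On `[ρ_∞/2, 2ρ_∞]` the second derivative `P'' = a γ ρ^(γ-2)` is bounded
below by a positive constant, and subtracting the corresponding parabola keeps `P` convex, which
gives the quadratic bound. Outside that interval, convexity of `F` together with `F(ρ_∞) = 0`
shows that `F` is at least its (positive) values at the endpoints and grows at least linearly.
Since `F(ρ) = P(ρ) - P'(ρ_∞) ρ + a ρ_∞^γ`, linear growth of `F` absorbs the linear term, and
`F` dominates `1 + ρ^γ`. Strict positivity away from `ρ_∞` follows from the two lower bounds.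
-/

open Set

noncomputable def bregmanDiv (f : ℝ → ℝ) (f' x₀ x : ℝ) : ℝ := f x - f' * (x - x₀) - f x₀

@[simp]
theorem bregmanDiv_self (f : ℝ → ℝ) (f' x₀ : ℝ) : bregmanDiv f f' x₀ x₀ = 0 := by
  simp [bregmanDiv]

theorem convexOn_bregmanDiv {f : ℝ → ℝ} {s : Set ℝ} (hf : ConvexOn ℝ s f) (f' x₀ : ℝ) :
    ConvexOn ℝ s (bregmanDiv f f' x₀) := by
  refine ⟨hf.1, fun x hx y hy a b ha hb hab => ?_⟩
  have := hf.2 hx hy ha hb hab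
  simp only [bregmanDiv, smul_eq_mul] at *
  linear_combination this + (f x₀ - f' * x₀) * hab

theorem bregmanDiv_nonneg {f : ℝ → ℝ} {s : Set ℝ} {f' x₀ x : ℝ} (hf : ConvexOn ℝ s f)
    (hx₀ : x₀ ∈ s) (hx : x ∈ s) (hd : HasDerivAt f f' x₀) : 0 ≤ bregmanDiv f f' x₀ x := by
  rw [bregmanDiv]
  rcases lt_trichotomy x x₀ with h | rfl | h
  · have := hf.slope_le_of_hasDerivAt hx hx₀ h hd
    rw [slope_def_field, div_le_iff₀ (sub_pos.2 h)] at this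
    linarith
  · simp
  · have := hf.le_slope_of_hasDerivAt hx₀ hx h hd
    rw [slope_def_field, le_div_iff₀ (sub_pos.2 h)] at this
    linarith

theorem sq_le_bregmanDiv_of_deriv2_ge {f f' f'' : ℝ → ℝ} {D : Set ℝ} {m x₀ x : ℝ}
    (hD : Convex ℝ D) (hx₀ : x₀ ∈ D) (hx : x ∈ D) (hf : ∀ y, HasDerivAt f (f' y) y)
    (hf' : ∀ y ∈ interior D, HasDerivAt f' (f'' y) y) (hm : ∀ y ∈ interior D, m ≤ f'' y) :
    m / 2 * (x - x₀) ^ 2 ≤ bregmanDiv f (f' x₀) x₀ x := by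
  set g : ℝ → ℝ := fun y => f y - m / 2 * (y - x₀) ^ 2
  set g' : ℝ → ℝ := fun y => f' y - m * (y - x₀)
  have hg : ∀ y, HasDerivAt g (g' y) y := fun y =>
    ((hf y).sub ((((hasDerivAt_id y).sub_const x₀).pow 2).const_mul (m / 2))).congr_deriv
      (by simp only [g', id]; ring)
  have hg' : ∀ y ∈ interior D, HasDerivAt g' (f'' y - m) y := fun y hy =>
    ((hf' y hy).sub (((hasDerivAt_id y).sub_const x₀).const_mul m)).congr_deriv (by ring)
  have hg_convex : ConvexOn ℝ D g :=
    convexOn_of_hasDerivWithinAt2_nonneg hD (fun y _ => (hg y).continuousAt.continuousWithinAt)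
      (fun y _ => (hg y).hasDerivWithinAt) (fun y hy => (hg' y hy).hasDerivWithinAt)
      (fun y hy => sub_nonneg.2 (hm y hy))
  have := bregmanDiv_nonneg hg_convex hx₀ hx (by simpa [g'] using hg x₀)
  simp only [bregmanDiv, g] at this ⊢
  linarith

theorem ConvexOn.min_le_of_notMem_Icc {f : ℝ → ℝ} {s : Set ℝ} {u x₀ v x : ℝ}
    (hf : ConvexOn ℝ s f) (hu : u ∈ s) (hv : v ∈ s) (hx : x ∈ s) (hux₀ : u < x₀) (hx₀v : x₀ < v)
    (hfu : f x₀ ≤ f u) (hfv : f x₀ ≤ f v) (hxuv : x ∉ Icc u v) : min (f u) (f v) ≤ f x := by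
  have hx₀ : x₀ ∈ s := hf.1.ordConnected.out hu hv ⟨hux₀.le, hx₀v.le⟩
  rcases not_and_or.1 hxuv with hxu | hvx
  · exact (min_le_left _ _).trans (hf.le_left_of_right_le'' hx hx₀ (not_le.1 hxu).le hux₀ hfu)
  · exact (min_le_right _ _).trans (hf.le_right_of_left_le'' hx₀ hx hx₀v (not_le.1 hvx).le hfv)

theorem ConvexOn.sub_mul_sub_le {f : ℝ → ℝ} {s : Set ℝ} {x₀ v x : ℝ} (hf : ConvexOn ℝ s f)
    (hx₀ : x₀ ∈ s) (hv : v ∈ s) (hx : x ∈ s) (hx₀v : x₀ < v) (hvx : v ≤ x) :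
    (f v - f x₀) * (x - x₀) ≤ (f x - f x₀) * (v - x₀) := by
  have := hf.secant_mono hx₀ hv hx hx₀v.ne' (hx₀v.trans_le hvx).ne' hvx
  rwa [div_le_div_iff₀ (sub_pos.2 hx₀v) (sub_pos.2 (hx₀v.trans_le hvx))] at this

noncomputable def pressure (a γ ρ : ℝ) : ℝ := a / (γ - 1) * ρ ^ γ

noncomputable def pressureDeriv (a γ ρ : ℝ) : ℝ := a * γ / (γ - 1) * ρ ^ (γ - 1)

section Pressure

variable {a γ ρi : ℝ}

theorem hasDerivAt_pressure (a : ℝ) (hγ : 1 ≤ γ) (x : ℝ) :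
    HasDerivAt (pressure a γ) (pressureDeriv a γ x) x :=
  ((Real.hasDerivAt_rpow_const (Or.inr hγ)).const_mul (a / (γ - 1))).congr_deriv <| by
    rw [pressureDeriv]; ring

theorem hasDerivAt_pressureDeriv (a : ℝ) (hγ : γ ≠ 1) {x : ℝ} (hx : x ≠ 0) :
    HasDerivAt (pressureDeriv a γ) (a * γ * x ^ (γ - 1) / x) x :=
  ((Real.hasDerivAt_rpow_const (Or.inl hx)).const_mul (a * γ / (γ - 1))).congr_deriv <| by
    rw [Real.rpow_sub_one hx, ← sub_ne_zero] at *
    field_simp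

theorem convexOn_pressure (ha : 0 ≤ a) (hγ : 1 ≤ γ) : ConvexOn ℝ (Ici 0) (pressure a γ) :=
  (convexOn_rpow hγ).smul (div_nonneg ha (sub_nonneg.2 hγ))

theorem bregmanDiv_pressure_eq (a : ℝ) (hγ : γ ≠ 1) (hρi : ρi ≠ 0) (ρ : ℝ) :
    bregmanDiv (pressure a γ) (pressureDeriv a γ ρi) ρi ρ
      = pressure a γ ρ - pressureDeriv a γ ρi * ρ + a * ρi ^ γ := by
  have hγ' : γ - 1 ≠ 0 := sub_ne_zero.2 hγ
  simp only [bregmanDiv, pressure, pressureDeriv, Real.rpow_sub_one hρi]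
  field_simp
  ring

theorem exists_sq_le_bregmanDiv_pressure (ha : 0 < a) (hγ : 1 < γ) (hρi : 0 < ρi) :
    ∃ c > 0, ∀ ρ ∈ Icc (ρi / 2) (2 * ρi),
      c * (ρ - ρi) ^ 2 ≤ bregmanDiv (pressure a γ) (pressureDeriv a γ ρi) ρi ρ := by
  -- `P'' y = a γ y ^ (γ - 1) / y ≥ a γ (ρi / 2) ^ (γ - 1) / (2 ρi)` on the interval
  refine ⟨a * γ * (ρi / 2) ^ (γ - 1) / (2 * ρi) / 2, by positivity, fun ρ hρ => ?_⟩
  refine sq_le_bregmanDiv_of_deriv2_ge (convex_Icc _ _) ⟨by linarith, by linarith⟩ hρ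
    (hasDerivAt_pressure a hγ.le) (fun y hy => hasDerivAt_pressureDeriv a hγ.ne' ?_)
    (fun y hy => ?_) <;> rw [interior_Icc] at hy
  · exact (by linarith [hy.1] : 0 < y).ne'
  · have hy₀ : 0 < y := by linarith [hy.1]
    have : (ρi / 2) ^ (γ - 1) ≤ y ^ (γ - 1) :=
      Real.rpow_le_rpow (by positivity) hy.1.le (by linarith)
    gcongr
    exact hy.2.le

theorem exists_lower_bounds_bregmanDiv_pressure (ha : 0 < a) (hγ : 1 < γ) (hρi : 0 < ρi) :
    ∃ δ > 0, ∀ ρ, 0 ≤ ρ → ρ ∉ Icc (ρi / 2) (2 * ρi) →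
      δ ≤ bregmanDiv (pressure a γ) (pressureDeriv a γ ρi) ρi ρ ∧
      δ * ρ ≤ 2 * ρi * bregmanDiv (pressure a γ) (pressureDeriv a γ ρi) ρi ρ := by
  set B := bregmanDiv (pressure a γ) (pressureDeriv a γ ρi) ρi
  obtain ⟨c, hc, hquad⟩ := exists_sq_le_bregmanDiv_pressure ha hγ hρi
  have hB : ConvexOn ℝ (Ici 0) B := convexOn_bregmanDiv (convexOn_pressure ha.le hγ.le) _ _
  have hBu : 0 < B (ρi / 2) :=
    (mul_pos hc (by nlinarith)).trans_le (hquad _ ⟨le_rfl, by linarith⟩)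
  have hBv : 0 < B (2 * ρi) :=
    (mul_pos hc (by nlinarith)).trans_le (hquad _ ⟨by linarith, le_rfl⟩)
  refine ⟨min (B (ρi / 2)) (B (2 * ρi)), lt_min hBu hBv, fun ρ hρ hout => ?_⟩
  have hmin : min (B (ρi / 2)) (B (2 * ρi)) ≤ B ρ :=
    hB.min_le_of_notMem_Icc (x₀ := ρi) (mem_Ici.2 (by positivity)) (mem_Ici.2 (by positivity)) hρ
      (by linarith) (by linarith) (by simpa [B] using hBu.le) (by simpa [B] using hBv.le) hout
  refine ⟨hmin, ?_⟩
  rcases not_and_or.1 hout with hρu | hρv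
  · nlinarith [mul_le_mul_of_nonneg_left hmin hρi.le, lt_min hBu hBv]
  · have := hB.sub_mul_sub_le (mem_Ici.2 hρi.le) (mem_Ici.2 (by positivity)) hρ
      (by linarith) (not_le.1 hρv).le
    simp only [B, bregmanDiv_self, sub_zero] at this
    nlinarith [min_le_right (B (ρi / 2)) (B (2 * ρi))]

theorem exists_one_add_rpow_le_bregmanDiv_pressure (ha : 0 < a) (hγ : 1 < γ) (hρi : 0 < ρi) :
    ∃ c > 0, ∀ ρ, 0 ≤ ρ → ρ ∉ Icc (ρi / 2) (2 * ρi) →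
      c * (1 + ρ ^ γ) ≤ bregmanDiv (pressure a γ) (pressureDeriv a γ ρi) ρi ρ := by
  obtain ⟨δ, hδ, hlow⟩ := exists_lower_bounds_bregmanDiv_pressure ha hγ hρi
  have h₃ : ∀ ρ, a / (γ - 1) * ρ ^ γ ≤
      bregmanDiv (pressure a γ) (pressureDeriv a γ ρi) ρi ρ + pressureDeriv a γ ρi * ρ := by
    intro ρ
    rw [bregmanDiv_pressure_eq a hγ.ne' hρi.ne', pressure]
    linarith [mul_nonneg ha.le (Real.rpow_nonneg hρi.le γ)]
  set B := bregmanDiv (pressure a γ) (pressureDeriv a γ ρi) ρi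
  set K := a / (γ - 1)
  set L := pressureDeriv a γ ρi
  have hK : 0 < K := div_pos ha (sub_pos.2 hγ)
  have hL : 0 < L := by unfold L pressureDeriv; positivity
  -- `1 ≤ B ρ / δ` and `K ρ ^ γ ≤ B ρ + L ρ ≤ B ρ (1 + 2 ρi L / δ)`
  refine ⟨δ * K / (K + δ + L * (2 * ρi)), by positivity, fun ρ hρ hout => ?_⟩
  obtain ⟨h₁, h₂⟩ := hlow ρ hρ hout
  rw [div_mul_eq_mul_div, div_le_iff₀ (by positivity)]
  nlinarith [mul_le_mul_of_nonneg_left h₁ hK.le, mul_le_mul_of_nonneg_left (h₃ ρ) hδ.le,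
    mul_le_mul_of_nonneg_left h₂ hL.le]

theorem bregmanDiv_pressure_pos (ha : 0 < a) (hγ : 1 < γ) (hρi : 0 < ρi) {ρ : ℝ} (hρ : 0 ≤ ρ)
    (hne : ρ ≠ ρi) : 0 < bregmanDiv (pressure a γ) (pressureDeriv a γ ρi) ρi ρ := by
  by_cases hin : ρ ∈ Icc (ρi / 2) (2 * ρi)
  · obtain ⟨c, hc, hquad⟩ := exists_sq_le_bregmanDiv_pressure ha hγ hρi
    exact (mul_pos hc (sq_pos_of_ne_zero (sub_ne_zero.2 hne))).trans_le (hquad ρ hin)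
  · obtain ⟨c, hc, hout⟩ := exists_one_add_rpow_le_bregmanDiv_pressure ha hγ hρi
    exact (mul_pos hc (by positivity)).trans_le (hout ρ hρ hin)

end Pressure

/-- Coercivity of the relative internal energy (Bregman divergence of the pressure
potential `P(ρ) = (a/(γ−1)) ρ^γ` at `ρ_∞ > 0`): it is non-negative for `ρ ≥ 0`, vanishes
only at `ρ = ρ_∞`, dominates a positive multiple of `(ρ − ρ_∞)²` on `[ρ_∞/2, 2ρ_∞]`, and
dominates a positive multiple of `1 + ρ^γ` outside that interval. -/
theorem relative_internal_energy_coercive (a γ ρi : ℝ) (ha : 0 < a) (hγ : 1 < γ)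
    (hρi : 0 < ρi) :
    let P : ℝ → ℝ := fun ρ => a / (γ - 1) * ρ ^ γ
    let F : ℝ → ℝ := fun ρ => P ρ - (a * γ / (γ - 1) * ρi ^ (γ - 1)) * (ρ - ρi) - P ρi
    (∀ ρ : ℝ, 0 ≤ ρ → 0 ≤ F ρ) ∧
    (∀ ρ : ℝ, 0 ≤ ρ → (F ρ = 0 ↔ ρ = ρi)) ∧
    (∃ c > 0, ∀ ρ ∈ Set.Icc (ρi / 2) (2 * ρi), c * (ρ - ρi) ^ 2 ≤ F ρ) ∧
    (∃ c > 0, ∀ ρ : ℝ, 0 ≤ ρ → ρ ∉ Set.Icc (ρi / 2) (2 * ρi) → c * (1 + ρ ^ γ) ≤ F ρ) := by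
  intro P F
  refine ⟨fun ρ hρ => ?_, fun ρ hρ => ⟨fun h => ?_, ?_⟩,
    exists_sq_le_bregmanDiv_pressure ha hγ hρi,
    exists_one_add_rpow_le_bregmanDiv_pressure ha hγ hρi⟩
  · exact bregmanDiv_nonneg (convexOn_pressure ha.le hγ.le) (mem_Ici.2 hρi.le) hρ
      (hasDerivAt_pressure a hγ.le ρi)
  · by_contra hne
    exact (bregmanDiv_pressure_pos ha hγ hρi hρ hne).ne' h
  · rintro rfl
    exact bregmanDiv_self _ _ _
end

section
/- Let (ρ_n, m_n) be sequences of measurable functions on (0,T) × B, B a bounded ball in R^d, with ρ_n ≥ 0, such that ρ_n → ρ strongly in L^γ((0,T)×B), h_n := m_n/√ρ_n (set to 0 where ρ_n = 0) converges weakly in L²((0,T)×B; R^d) to some h, and m_n → m weakly in L^{2γ/(γ+1)}((0,T)×B; R^d). Then m = √ρ · h almost everywhere. -/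
/-!
Off the vacuum `mₙ = √ρₙ • hₙ`. Since `(√a - √b)² ≤ |a - b|`, strong convergence of `ρₙ` in
`L^γ ⊆ L¹` gives `√ρₙ → √ρ` strongly in `L²`. For a bounded test function `g`,
`∫ ⟪g, mₙ⟫ = ⟪√ρₙ • g, hₙ⟫_{L²}` pairs a strongly with a weakly convergent sequence (the latter
bounded by Banach–Steinhaus), so it tends to `∫ ⟪g, √ρ • h⟫`; it also tends to `∫ ⟪g, m⟫`, and
bounded test functions separate integrable functions.
-/

open MeasureTheory Filter Topology
open scoped ENNReal RealInnerProductSpace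

theorem sq_sqrt_sub_sqrt_le_abs_sub {a b : ℝ} (ha : 0 ≤ a) (hb : 0 ≤ b) :
    (√a - √b) ^ 2 ≤ |a - b| := by
  wlog hab : b ≤ a generalizing a b
  · rw [abs_sub_comm, ← neg_sub, neg_sq]
    exact this hb ha (le_of_not_ge hab)
  have hsqrt : √b ≤ √a := Real.sqrt_le_sqrt hab
  rw [abs_of_nonneg (sub_nonneg.mpr hab)]
  nlinarith [Real.sq_sqrt ha, Real.sq_sqrt hb, Real.sqrt_nonneg b]

theorem eq_sqrt_smul_of_eq_ite {E : Type*} [AddCommGroup E] [Module ℝ E] {r : ℝ} {v w : E}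
    (hr : 0 ≤ r) (hw : w = if r = 0 then 0 else (√r)⁻¹ • v) (hv : r = 0 → v = 0) :
    v = √r • w := by
  rcases hr.eq_or_lt with hr0 | hr0
  · simp [hv hr0.symm, ← hr0]
  · rw [hw, if_neg hr0.ne', smul_smul, mul_inv_cancel₀ (Real.sqrt_pos.mpr hr0).ne', one_smul]

section InnerProductSpace

variable {𝕜 E ι : Type*} [RCLike 𝕜] [NormedAddCommGroup E] [InnerProductSpace 𝕜 E]
  [CompleteSpace E]

theorem exists_forall_norm_le_of_forall_bddAbove_norm_inner {x : ι → E}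
    (hx : ∀ y, BddAbove (Set.range fun i => ‖inner 𝕜 y (x i)‖)) : ∃ C, ∀ i, ‖x i‖ ≤ C := by
  obtain ⟨C, hC⟩ := banach_steinhaus (g := fun i => innerSL 𝕜 (x i)) fun y => by
    obtain ⟨C, hC⟩ := hx y
    exact ⟨C, fun i => (norm_inner_symm _ _).trans_le (hC ⟨i, rfl⟩)⟩
  exact ⟨C, fun i => (innerSL_apply_norm 𝕜 (x i)).symm.trans_le (hC i)⟩

theorem tendsto_inner_of_tendsto_of_forall_tendsto_inner {u x : ℕ → E} {u₀ x₀ : E}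
    (hu : Tendsto u atTop (𝓝 u₀))
    (hx : ∀ y, Tendsto (fun n => inner 𝕜 y (x n)) atTop (𝓝 (inner 𝕜 y x₀))) :
    Tendsto (fun n => inner 𝕜 (u n) (x n)) atTop (𝓝 (inner 𝕜 u₀ x₀)) := by
  obtain ⟨C, hC⟩ := exists_forall_norm_le_of_forall_bddAbove_norm_inner (𝕜 := 𝕜) (x := x)
    fun y => (hx y).norm.bddAbove_range
  have hsmall : Tendsto (fun n => inner 𝕜 (u n - u₀) (x n)) atTop (𝓝 0) := by
    refine squeeze_zero_norm (fun n => (norm_inner_le_norm _ _).trans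
      (mul_le_mul_of_nonneg_left (hC n) (norm_nonneg _))) ?_
    simpa using (tendsto_iff_norm_sub_tendsto_zero.mp hu).mul_const C
  simpa [inner_sub_left] using hsmall.add (hx u₀)

end InnerProductSpace

namespace MeasureTheory

variable {X : Type*} [MeasurableSpace X] {μ : Measure X}

theorem eLpNorm_sqrt_sub_sqrt_le {f g : X → ℝ} (hf : 0 ≤ f) (hg : 0 ≤ g) :
    eLpNorm (fun x => √(f x) - √(g x)) 2 μ ≤ eLpNorm (f - g) 1 μ ^ (1 / 2 : ℝ) := by
  rw [eLpNorm_eq_lintegral_rpow_enorm_toReal two_ne_zero ENNReal.ofNat_ne_top,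
    eLpNorm_one_eq_lintegral_enorm, ENNReal.toReal_ofNat]
  refine ENNReal.rpow_le_rpow (lintegral_mono fun x => ?_) (by norm_num)
  rw [← ofReal_norm, ← ofReal_norm, ENNReal.ofReal_rpow_of_nonneg
    (norm_nonneg _) zero_le_two, Real.norm_eq_abs, Real.norm_eq_abs, Real.rpow_two, sq_abs]
  exact ENNReal.ofReal_le_ofReal (sq_sqrt_sub_sqrt_le_abs_sub (hf x) (hg x))

theorem MemLp.sqrt {f : X → ℝ} (hf : MemLp f 1 μ) (h0 : 0 ≤ f) :
    MemLp (fun x => √(f x)) 2 μ := by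
  refine ⟨Real.continuous_sqrt.comp_aestronglyMeasurable hf.1, ?_⟩
  have hle := eLpNorm_sqrt_sub_sqrt_le (μ := μ) h0 le_rfl
  simp only [Pi.zero_apply, Real.sqrt_zero, sub_zero] at hle
  exact hle.trans_lt (ENNReal.rpow_lt_top_of_nonneg (by norm_num) hf.2.ne)

theorem tendsto_eLpNorm_sqrt_sub_sqrt {ι : Type*} {l : Filter ι} {f : ι → X → ℝ} {g : X → ℝ}
    (hf : ∀ i, 0 ≤ f i) (hg : 0 ≤ g) (h : Tendsto (fun i => eLpNorm (f i - g) 1 μ) l (𝓝 0)) :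
    Tendsto (fun i => eLpNorm (fun x => √(f i x) - √(g x)) 2 μ) l (𝓝 0) := by
  have hroot : Tendsto (fun i => eLpNorm (f i - g) 1 μ ^ (1 / 2 : ℝ)) l (𝓝 0) := by
    have := (ENNReal.continuous_rpow_const (y := 1 / 2)).tendsto 0 |>.comp h
    rwa [ENNReal.zero_rpow_of_pos (by norm_num)] at this
  exact tendsto_of_tendsto_of_tendsto_of_le_of_le tendsto_const_nhds hroot
    (fun _ => zero_le) fun i => eLpNorm_sqrt_sub_sqrt_le (hf i) hg

theorem tendsto_eLpNorm_of_exponent_le [IsFiniteMeasure μ] {E ι : Type*} [NormedAddCommGroup E]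
    {l : Filter ι} {p q : ℝ≥0∞} (hpq : p ≤ q) {f : ι → X → E}
    (hf : ∀ i, AEStronglyMeasurable (f i) μ) (h : Tendsto (fun i => eLpNorm (f i) q μ) l (𝓝 0)) :
    Tendsto (fun i => eLpNorm (f i) p μ) l (𝓝 0) := by
  rcases eq_or_ne p 0 with rfl | hp
  · simpa using tendsto_const_nhds
  have hexp : 0 ≤ 1 / p.toReal - 1 / q.toReal := by
    rcases eq_or_ne q ∞ with rfl | hq
    · simp
    have hp_top : p ≠ ∞ := ne_top_of_le_ne_top hq hpq
    exact sub_nonneg.mpr (one_div_le_one_div_of_le (ENNReal.toReal_pos hp hp_top)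
      (ENNReal.toReal_mono hq hpq))
  have hlim := ENNReal.Tendsto.mul_const h
    (Or.inr (ENNReal.rpow_ne_top_of_nonneg hexp (measure_ne_top μ Set.univ)))
  rw [zero_mul] at hlim
  exact tendsto_of_tendsto_of_tendsto_of_le_of_le tendsto_const_nhds hlim
    (fun _ => zero_le) fun i => eLpNorm_le_eLpNorm_mul_rpow_measure_univ hpq (hf i)


section L2

variable {E : Type*} [NormedAddCommGroup E] [InnerProductSpace ℝ E]

theorem MemLp.inner_toLp_toLp {f g : X → E} (hf : MemLp f 2 μ) (hg : MemLp g 2 μ) :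
    ⟪hf.toLp f, hg.toLp g⟫ = ∫ x, ⟪f x, g x⟫ ∂μ := by
  rw [L2.inner_def]
  refine integral_congr_ae ?_
  filter_upwards [hf.coeFn_toLp, hg.coeFn_toLp] with x hfx hgx
  rw [hfx, hgx]

variable [CompleteSpace E]

theorem tendsto_integral_inner_smul_of_tendsto_eLpNorm_of_weakly
    {φ : ℕ → X → ℝ} {φ₀ : X → ℝ} {f : ℕ → X → E} {f₀ g : X → E}
    (hφ : ∀ n, MemLp (φ n) 2 μ) (hφ₀ : MemLp φ₀ 2 μ)
    (hφ_tendsto : Tendsto (fun n => eLpNorm (fun x => φ n x - φ₀ x) 2 μ) atTop (𝓝 0))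
    (hf : ∀ n, MemLp (f n) 2 μ) (hf₀ : MemLp f₀ 2 μ)
    (hf_weakly : ∀ v : X → E, MemLp v 2 μ →
      Tendsto (fun n => ∫ x, ⟪v x, f n x⟫ ∂μ) atTop (𝓝 (∫ x, ⟪v x, f₀ x⟫ ∂μ)))
    (hg : MemLp g ∞ μ) :
    Tendsto (fun n => ∫ x, ⟪g x, φ n x • f n x⟫ ∂μ) atTop
      (𝓝 (∫ x, ⟪g x, φ₀ x • f₀ x⟫ ∂μ)) := by
  have hu : ∀ n, MemLp (φ n • g) 2 μ := fun n => hg.smul (hφ n)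
  have hu₀ : MemLp (φ₀ • g) 2 μ := hg.smul hφ₀
  have hu_tendsto : Tendsto (fun n => (hu n).toLp _) atTop (𝓝 (hu₀.toLp _)) := by
    rw [Lp.tendsto_Lp_iff_tendsto_eLpNorm'']
    have hlim := ENNReal.Tendsto.mul_const hφ_tendsto (Or.inr hg.eLpNorm_ne_top)
    rw [zero_mul] at hlim
    refine tendsto_of_tendsto_of_tendsto_of_le_of_le tendsto_const_nhds hlim
      (fun _ => zero_le) fun n => ?_
    rw [← sub_smul]
    exact eLpNorm_smul_le_mul_eLpNorm hg.1 ((hφ n).1.sub hφ₀.1)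
  have hf_weakly_Lp : ∀ v : Lp E 2 μ,
      Tendsto (fun n => ⟪v, (hf n).toLp _⟫) atTop (𝓝 ⟪v, hf₀.toLp _⟫) := by
    intro v
    rw [← Lp.toLp_coeFn v (Lp.memLp v)]
    simp only [MemLp.inner_toLp_toLp]
    exact hf_weakly v (Lp.memLp v)
  have := tendsto_inner_of_tendsto_of_forall_tendsto_inner hu_tendsto hf_weakly_Lp
  simpa only [MemLp.inner_toLp_toLp, Pi.smul_apply', real_inner_smul_left,
    real_inner_smul_right] using this

theorem ae_eq_of_forall_integral_inner_eq {f f' : X → E} (hf : Integrable f μ)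
    (hf' : Integrable f' μ)
    (h : ∀ g : X → E, MemLp g ∞ μ → ∫ x, ⟪g x, f x⟫ ∂μ = ∫ x, ⟪g x, f' x⟫ ∂μ) :
    f =ᵐ[μ] f' := by
  refine hf.ae_eq_of_forall_setIntegral_eq f f' hf' fun s hs _ => ?_
  have hindicator : ∀ (c : E) (F : X → E),
      ∫ x, ⟪s.indicator (fun _ => c) x, F x⟫ ∂μ = ∫ x in s, ⟪c, F x⟫ ∂μ := by
    intro c F
    rw [← integral_indicator hs]
    congr 1 with x
    by_cases hx : x ∈ s <;> simp [hx]
  rw [← sub_eq_zero, ← integral_sub hf.integrableOn hf'.integrableOn]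
  refine integral_eq_zero_of_forall_integral_inner_eq_zero ℝ _
    (hf.integrableOn.sub hf'.integrableOn) fun c => ?_
  simp only [inner_sub_right]
  rw [integral_sub (hf.integrableOn.const_inner c) (hf'.integrableOn.const_inner c),
    ← hindicator, ← hindicator, h _ ((memLp_top_const c).indicator hs), sub_self]

end L2

end MeasureTheory


theorem weak_limit_momentum_eq_sqrt_density_mul_general
    {X : Type*} [MeasurableSpace X] (μ : Measure X) [IsFiniteMeasure μ]
    (d : ℕ) (γ : ℝ) (hγ : 1 < γ)
    (ρn : ℕ → X → ℝ) (mn hn : ℕ → X → EuclideanSpace ℝ (Fin d))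
    (ρ : X → ℝ) (m h : X → EuclideanSpace ℝ (Fin d))
    (hρnonneg : ∀ n x, 0 ≤ ρn n x) (hρposlim : ∀ x, 0 ≤ ρ x)
    (hdef : ∀ n x, hn n x = if ρn n x = 0 then 0 else (Real.sqrt (ρn n x))⁻¹ • mn n x)
    (hvac : ∀ n, ∀ᵐ x ∂μ, ρn n x = 0 → mn n x = 0)
    (hmemρn : ∀ n, MemLp (ρn n) (ENNReal.ofReal γ) μ)
    (hmemρ : MemLp ρ (ENNReal.ofReal γ) μ)
    (hmemhn : ∀ n, MemLp (hn n) 2 μ) (hmemh : MemLp h 2 μ)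
    (hmemm : MemLp m (ENNReal.ofReal (2 * γ / (γ + 1))) μ)
    (hstrong : Tendsto (fun n => eLpNorm (ρn n - ρ) (ENNReal.ofReal γ) μ) atTop (nhds 0))
    (hweakL2 : ∀ g : X → EuclideanSpace ℝ (Fin d), MemLp g 2 μ →
      Tendsto (fun n => ∫ x, ⟪g x, hn n x⟫ ∂μ) atTop (nhds (∫ x, ⟪g x, h x⟫ ∂μ)))
    (hweakm : ∀ g : X → EuclideanSpace ℝ (Fin d),
      MemLp g (ENNReal.ofReal (2 * γ / (γ - 1))) μ →
      Tendsto (fun n => ∫ x, ⟪g x, mn n x⟫ ∂μ) atTop (nhds (∫ x, ⟪g x, m x⟫ ∂μ))) :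
    ∀ᵐ x ∂μ, m x = Real.sqrt (ρ x) • h x := by
  have hγ1 : 1 ≤ ENNReal.ofReal γ := ENNReal.one_le_ofReal.mpr hγ.le
  have hm_eq : ∀ n, mn n =ᵐ[μ] fun x => √(ρn n x) • hn n x := fun n => by
    filter_upwards [hvac n] with x hx using eq_sqrt_smul_of_eq_ite (hρnonneg n x) (hdef n x) hx
  have hsqrtρn : ∀ n, MemLp (fun x => √(ρn n x)) 2 μ :=
    fun n => ((hmemρn n).mono_exponent hγ1).sqrt (hρnonneg n)
  have hsqrtρ : MemLp (fun x => √(ρ x)) 2 μ := (hmemρ.mono_exponent hγ1).sqrt hρposlim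
  have hsqrt_tendsto : Tendsto (fun n => eLpNorm (fun x => √(ρn n x) - √(ρ x)) 2 μ) atTop (𝓝 0) :=
    tendsto_eLpNorm_sqrt_sub_sqrt hρnonneg hρposlim
      (tendsto_eLpNorm_of_exponent_le hγ1 (fun n => ((hmemρn n).sub hmemρ).1) hstrong)
  have hm_int : Integrable m μ := hmemm.integrable <| ENNReal.one_le_ofReal.mpr <| by
    rw [le_div_iff₀ (by linarith)]; linarith
  have hsqrtρh_int : Integrable (fun x => √(ρ x) • h x) μ :=
    memLp_one_iff_integrable.mp (hmemh.smul hsqrtρ)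
  refine ae_eq_of_forall_integral_inner_eq hm_int hsqrtρh_int fun g hg => ?_
  refine tendsto_nhds_unique (hweakm g (hg.mono_exponent le_top)) ?_
  refine (tendsto_integral_inner_smul_of_tendsto_eLpNorm_of_weakly hsqrtρn hsqrtρ hsqrt_tendsto
    hmemhn hmemh hweakL2 hg).congr fun n => integral_congr_ae ?_
  filter_upwards [hm_eq n] with x hx
  rw [hx]

/-- If `ρ_n → ρ` strongly in `L^γ`, `h_n := m_n/√ρ_n` (set to `0` on the vacuum
`{ρ_n = 0}`, where also `m_n = 0`) converges weakly in `L²` to `h`, and `m_n → m` weakly in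
`L^{2γ/(γ+1)}`, then `m = √ρ · h` almost everywhere. -/
theorem weak_limit_momentum_eq_sqrt_density_mul
    {X : Type*} [MeasurableSpace X] (μ : Measure X) [IsFiniteMeasure μ]
    (d : ℕ) (γ : ℝ) (hγ : 1 < γ)
    (ρn : ℕ → X → ℝ) (mn hn : ℕ → X → EuclideanSpace ℝ (Fin d))
    (ρ : X → ℝ) (m h : X → EuclideanSpace ℝ (Fin d))
    (hρnonneg : ∀ n x, 0 ≤ ρn n x) (hρposlim : ∀ x, 0 ≤ ρ x)
    (hdef : ∀ n x, hn n x = if ρn n x = 0 then 0 else (Real.sqrt (ρn n x))⁻¹ • mn n x)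
    (hvac : ∀ n, ∀ᵐ x ∂μ, ρn n x = 0 → mn n x = 0)
    (hmemρn : ∀ n, MemLp (ρn n) (ENNReal.ofReal γ) μ)
    (hmemρ : MemLp ρ (ENNReal.ofReal γ) μ)
    (hmemhn : ∀ n, MemLp (hn n) 2 μ) (hmemh : MemLp h 2 μ)
    (hmemmn : ∀ n, MemLp (mn n) (ENNReal.ofReal (2 * γ / (γ + 1))) μ)
    (hmemm : MemLp m (ENNReal.ofReal (2 * γ / (γ + 1))) μ)
    (hstrong : Tendsto (fun n => eLpNorm (ρn n - ρ) (ENNReal.ofReal γ) μ) atTop (nhds 0))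
    (hweakL2 : ∀ g : X → EuclideanSpace ℝ (Fin d), MemLp g 2 μ →
      Tendsto (fun n => ∫ x, ⟪g x, hn n x⟫ ∂μ) atTop (nhds (∫ x, ⟪g x, h x⟫ ∂μ)))
    (hweakm : ∀ g : X → EuclideanSpace ℝ (Fin d),
      MemLp g (ENNReal.ofReal (2 * γ / (γ - 1))) μ →
      Tendsto (fun n => ∫ x, ⟪g x, mn n x⟫ ∂μ) atTop (nhds (∫ x, ⟪g x, m x⟫ ∂μ))) :
    ∀ᵐ x ∂μ, m x = Real.sqrt (ρ x) • h x :=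
  weak_limit_momentum_eq_sqrt_density_mul_general μ d γ hγ ρn mn hn ρ m h hρnonneg hρposlim hdef
    hvac hmemρn hmemρ hmemhn hmemh hmemm hstrong hweakL2 hweakm
end

section
/- Let g_n ≥ 0 converge weakly in L¹((0,T)×K) to g with ∫ g_n → ∫ g, where g_n = P(ρ_n) is given by a strictly convex function P of ρ_n ∈ L^γ and ρ_n → ρ weakly in L^γ with g = P(ρ). Then ρ_n → ρ strongly in L^γ((0,T)×K). -/
/-!
The Bregman divergence `D(y, t) = t^γ - y^γ - γ y^(γ-1) (t - y)` of the strictly convex function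
`t ↦ t^γ` is nonnegative and vanishes only at `t = y`. Testing the weak convergence against
`ρ^(γ-1) ∈ L^(γ/(γ-1))` and using `∫ ρₙ^γ → ∫ ρ^γ` gives `∫ D(ρ, ρₙ) → 0`. Along a subsequence
`D(ρ, ρₙ) → 0` a.e., and strict convexity turns this into `ρₙ → ρ` a.e.; hence `ρₙ → ρ` in
measure. Finally Fatou's lemma applied to `C (|ρₙ|^γ + |ρ|^γ) - |ρₙ - ρ|^γ ≥ 0`, together with
`‖ρₙ‖_γ → ‖ρ‖_γ`, gives `‖ρₙ - ρ‖_γ → 0`.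
-/

open MeasureTheory Filter Topology Set
open scoped ENNReal

theorem StrictConvexOn.tendsto_of_tendsto_apply_of_isMinOn {ι : Type*} {l : Filter ι}
    {s : Set ℝ} {φ : ℝ → ℝ} {y : ℝ} (hφ : StrictConvexOn ℝ s φ) (hmin : IsMinOn φ s y)
    (hy : y ∈ s) {u : ι → ℝ} (hu : ∀ i, u i ∈ s) (h : Tendsto (fun i => φ (u i)) l (𝓝 (φ y))) :
    Tendsto u l (𝓝 y) := by
  have hlt : ∀ t ∈ s, t ≠ y → φ y < φ t := fun t ht hty =>
    (hmin ht).lt_of_ne fun h => hty (hφ.eq_of_isMinOn (fun z hz => h ▸ hmin hz) hmin ht hy)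
  refine tendsto_order.2 ⟨fun z hzy => ?_, fun z hyz => ?_⟩
  · by_cases hz : z ∈ s
    · filter_upwards [h.eventually_lt_const (hlt z hz hzy.ne)] with i hi
      by_contra! huz
      exact hi.not_ge (hφ.convexOn.le_left_of_right_le'' (hu i) hy huz hzy (hlt z hz hzy.ne).le)
    · exact Eventually.of_forall fun i => not_le.1 fun huz =>
        hz (hφ.1.ordConnected.out (hu i) hy ⟨huz, hzy.le⟩)
  · by_cases hz : z ∈ s
    · filter_upwards [h.eventually_lt_const (hlt z hz hyz.ne')] with i hi
      by_contra! hzu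
      exact hi.not_ge (hφ.convexOn.le_right_of_left_le'' hy (hu i) hyz hzu (hlt z hz hyz.ne').le)
    · exact Eventually.of_forall fun i => not_le.1 fun hzu =>
        hz (hφ.1.ordConnected.out hy (hu i) ⟨hyz.le, hzu⟩)

noncomputable def rpowBregman (γ y t : ℝ) : ℝ := t ^ γ - y ^ γ - γ * y ^ (γ - 1) * (t - y)

@[simp]
theorem rpowBregman_self (γ y : ℝ) : rpowBregman γ y y = 0 := by simp [rpowBregman]

theorem strictConvexOn_rpowBregman {γ : ℝ} (hγ : 1 < γ) (y : ℝ) :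
    StrictConvexOn ℝ (Ici 0) (rpowBregman γ y) := by
  refine ⟨convex_Ici 0, fun t ht u hu htu a b ha hb hab => ?_⟩
  have h := (strictConvexOn_rpow hγ).2 ht hu htu ha hb hab
  simp only [smul_eq_mul, rpowBregman] at h ⊢
  have hab' : b = 1 - a := by linarith
  subst hab'
  nlinarith

theorem rpowBregman_nonneg {γ y t : ℝ} (hγ : 1 < γ) (hy : 0 ≤ y) (ht : 0 ≤ t) :
    0 ≤ rpowBregman γ y t := by
  rcases hy.eq_or_lt with rfl | hy
  · simp [rpowBregman, Real.zero_rpow (by linarith : γ ≠ 0),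
      Real.zero_rpow (by linarith : γ - 1 ≠ 0), Real.rpow_nonneg ht]
  have hbern := one_add_mul_self_le_rpow_one_add (s := t / y - 1) (by
    have := div_nonneg ht hy.le; linarith) hγ.le
  rw [add_sub_cancel, Real.div_rpow ht hy.le, le_div_iff₀ (by positivity)] at hbern
  have hexpand : (1 + γ * (t / y - 1)) * y ^ γ = y ^ γ + γ * y ^ (γ - 1) * (t - y) := by
    rw [Real.rpow_sub_one hy.ne']
    field_simp
  unfold rpowBregman
  linarith

theorem isMinOn_rpowBregman {γ y : ℝ} (hγ : 1 < γ) (hy : 0 ≤ y) :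
    IsMinOn (rpowBregman γ y) (Ici 0) y := fun _ ht => by
  simpa using rpowBregman_nonneg hγ hy ht

theorem tendsto_of_tendsto_rpowBregman {ι : Type*} {l : Filter ι} {γ y : ℝ} (hγ : 1 < γ)
    (hy : 0 ≤ y) {u : ι → ℝ} (hu : ∀ i, 0 ≤ u i)
    (h : Tendsto (fun i => rpowBregman γ y (u i)) l (𝓝 0)) : Tendsto u l (𝓝 y) :=
  (strictConvexOn_rpowBregman hγ y).tendsto_of_tendsto_apply_of_isMinOn
    (isMinOn_rpowBregman hγ hy) hy hu (by simpa using h)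

theorem rpowBregman_eq (γ y t : ℝ) :
    rpowBregman γ y t = t ^ γ - y ^ γ - γ * (t * y ^ (γ - 1) - y * y ^ (γ - 1)) := by
  unfold rpowBregman
  ring

section Measure

variable {α : Type*} [MeasurableSpace α] {μ : Measure α}

theorem tendsto_lintegral_zero_of_le_of_tendsto_lintegral {F G : ℕ → α → ℝ≥0∞} {g : α → ℝ≥0∞}
    (hF : ∀ n, AEMeasurable (F n) μ) (hG : ∀ n, AEMeasurable (G n) μ) (hFG : ∀ n, F n ≤ G n)
    (hF0 : ∀ᵐ x ∂μ, Tendsto (fun n => F n x) atTop (𝓝 0))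
    (hGg : ∀ᵐ x ∂μ, Tendsto (fun n => G n x) atTop (𝓝 (g x)))
    (hint : Tendsto (fun n => ∫⁻ x, G n x ∂μ) atTop (𝓝 (∫⁻ x, g x ∂μ)))
    (hg : ∫⁻ x, g x ∂μ ≠ ∞) :
    Tendsto (fun n => ∫⁻ x, F n x ∂μ) atTop (𝓝 0) := by
  have hGF : Tendsto (fun n => ∫⁻ x, G n x - F n x ∂μ) atTop (𝓝 (∫⁻ x, g x ∂μ)) := by
    refine tendsto_of_le_liminf_of_limsup_le ?_ ?_
    · calc ∫⁻ x, g x ∂μ = ∫⁻ x, liminf (fun n => G n x - F n x) atTop ∂μ := by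
            refine lintegral_congr_ae ?_
            filter_upwards [hF0, hGg] with x hx0 hxg
            simpa using ((ENNReal.Tendsto.sub hxg hx0 (Or.inr ENNReal.zero_ne_top)).liminf_eq).symm
        _ ≤ _ := lintegral_liminf_le' fun n => (hG n).sub (hF n)
    · calc limsup (fun n => ∫⁻ x, G n x - F n x ∂μ) atTop
            ≤ limsup (fun n => ∫⁻ x, G n x ∂μ) atTop :=
              limsup_le_limsup (Eventually.of_forall fun n => lintegral_mono fun x => tsub_le_self)
        _ = ∫⁻ x, g x ∂μ := hint.limsup_eq
  have hlim := ENNReal.Tendsto.sub hint hGF (Or.inl hg)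
  rw [tsub_self] at hlim
  refine tendsto_of_tendsto_of_tendsto_of_le_of_le' tendsto_const_nhds hlim
    (Eventually.of_forall fun _ => zero_le) ?_
  filter_upwards [hGF.eventually_lt_const hg.lt_top] with n hn
  refine ENNReal.le_sub_of_add_le_right hn.ne (le_of_eq ?_)
  rw [← lintegral_add_left' (hF n)]
  exact lintegral_congr fun x => add_tsub_cancel_of_le (hFG n x)

theorem tendsto_eLpNorm_sub_of_tendsto_ae_of_tendsto_eLpNorm {E : Type*} [NormedAddCommGroup E]
    {p : ℝ≥0∞} (hp0 : p ≠ 0) (hp : p ≠ ∞) {f : ℕ → α → E} {g : α → E}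
    (hf : ∀ n, AEStronglyMeasurable (f n) μ) (hg : MemLp g p μ)
    (hfg : ∀ᵐ x ∂μ, Tendsto (fun n => f n x) atTop (𝓝 (g x)))
    (hnorm : Tendsto (fun n => eLpNorm (f n) p μ) atTop (𝓝 (eLpNorm g p μ))) :
    Tendsto (fun n => eLpNorm (f n - g) p μ) atTop (𝓝 0) := by
  set q := p.toReal
  have hq : 0 < q := ENNReal.toReal_pos hp0 hp
  set C := ENNReal.LpAddConst (ENNReal.ofReal q)⁻¹
  have hC : C ≠ ∞ := (ENNReal.LpAddConst_lt_top _).ne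
  have hpow : ∀ {u : ℕ → ℝ≥0∞} {v : ℝ≥0∞}, Tendsto u atTop (𝓝 v) →
      Tendsto (fun n => u n ^ q) atTop (𝓝 (v ^ q)) := fun h =>
    (ENNReal.continuous_rpow_const.tendsto _).comp h
  have hlint : ∀ h : α → E, ∫⁻ x, ‖h x‖ₑ ^ q ∂μ = eLpNorm h p μ ^ q := fun h => by
    rw [lintegral_rpow_enorm_eq_rpow_eLpNorm' hq, eLpNorm_eq_eLpNorm' hp0 hp]
  have hgq : ∀ᵐ x ∂μ, Tendsto (fun n => ‖f n x‖ₑ ^ q) atTop (𝓝 (‖g x‖ₑ ^ q)) := by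
    filter_upwards [hfg] with x hx using hpow hx.enorm
  suffices h : Tendsto (fun n => ∫⁻ x, ‖f n x - g x‖ₑ ^ q ∂μ) atTop (𝓝 0) by
    have h' := (ENNReal.continuous_rpow_const (y := q⁻¹)).tendsto 0 |>.comp h
    rw [ENNReal.zero_rpow_of_pos (inv_pos.2 hq)] at h'
    refine h'.congr fun n => ?_
    simp [eLpNorm_eq_lintegral_rpow_enorm_toReal hp0 hp, q]
  refine tendsto_lintegral_zero_of_le_of_tendsto_lintegral
    (G := fun n x => C * (‖f n x‖ₑ ^ q + ‖g x‖ₑ ^ q))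
    (g := fun x => C * (‖g x‖ₑ ^ q + ‖g x‖ₑ ^ q))
    (fun n => ((hf n).sub hg.1).enorm.pow_const q)
    (fun n => (((hf n).enorm.pow_const q).add (hg.1.enorm.pow_const q)).const_mul C)
    (fun n x => (ENNReal.rpow_le_rpow enorm_sub_le hq.le).trans
      (ENNReal.rpow_add_le_mul_rpow_add_rpow' _ _ hq.le)) ?_ ?_ ?_ ?_
  · filter_upwards [hfg] with x hx
    simpa [ENNReal.zero_rpow_of_pos hq] using hpow (tendsto_sub_nhds_zero_iff.2 hx).enorm
  · filter_upwards [hgq] with x hx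
    exact ENNReal.Tendsto.const_mul (hx.add tendsto_const_nhds) (Or.inr hC)
  · simp only [lintegral_const_mul' _ _ hC, lintegral_add_left' ((hf _).enorm.pow_const q),
      lintegral_add_left' (hg.1.enorm.pow_const q), hlint]
    exact ENNReal.Tendsto.const_mul ((hpow hnorm).add tendsto_const_nhds) (Or.inr hC)
  · rw [lintegral_const_mul' _ _ hC, lintegral_add_left' (hg.1.enorm.pow_const q), hlint]
    exact ENNReal.mul_ne_top hC (ENNReal.add_ne_top.2
      ⟨ENNReal.rpow_ne_top_of_nonneg hq.le hg.eLpNorm_ne_top,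
        ENNReal.rpow_ne_top_of_nonneg hq.le hg.eLpNorm_ne_top⟩)

theorem tendsto_eLpNorm_sub_of_tendstoInMeasure_of_tendsto_eLpNorm {E : Type*}
    [NormedAddCommGroup E] {p : ℝ≥0∞} (hp0 : p ≠ 0) (hp : p ≠ ∞) {f : ℕ → α → E} {g : α → E}
    (hf : ∀ n, AEStronglyMeasurable (f n) μ) (hg : MemLp g p μ)
    (hfg : TendstoInMeasure μ f atTop g)
    (hnorm : Tendsto (fun n => eLpNorm (f n) p μ) atTop (𝓝 (eLpNorm g p μ))) :
    Tendsto (fun n => eLpNorm (f n - g) p μ) atTop (𝓝 0) :=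
  tendsto_of_subseq_tendsto fun ns hns => by
    obtain ⟨ms, hms, hae⟩ := (hfg.comp hns).exists_seq_tendsto_ae
    exact ⟨ms, tendsto_eLpNorm_sub_of_tendsto_ae_of_tendsto_eLpNorm hp0 hp (fun _ => hf _) hg hae
      ((hnorm.comp hns).comp hms.tendsto_atTop)⟩

theorem integral_mul_indicator_one {s : Set α} (hs : MeasurableSet s) (f : α → ℝ) :
    ∫ x, f x * s.indicator 1 x ∂μ = ∫ x in s, f x ∂μ := by
  rw [← integral_indicator hs]
  congr 1 with x
  by_cases hx : x ∈ s <;> simp [hx]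

theorem ae_nonneg_of_tendsto_setIntegral {f : ℕ → α → ℝ} {g : α → ℝ} (hf : ∀ n, 0 ≤ᵐ[μ] f n)
    (hg : Integrable g μ)
    (h : ∀ s, MeasurableSet s → μ s < ∞ →
      Tendsto (fun n => ∫ x in s, f n x ∂μ) atTop (𝓝 (∫ x in s, g x ∂μ))) :
    0 ≤ᵐ[μ] g :=
  ae_nonneg_of_forall_setIntegral_nonneg hg fun s hs hμs =>
    ge_of_tendsto' (h s hs hμs) fun n => integral_nonneg_of_ae (ae_restrict_of_ae (hf n))

theorem tendstoInMeasure_zero_of_tendsto_integral {f : ℕ → α → ℝ} (hf0 : ∀ n, 0 ≤ᵐ[μ] f n)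
    (hf : ∀ n, Integrable (f n) μ) (h : Tendsto (fun n => ∫ x, f n x ∂μ) atTop (𝓝 0)) :
    TendstoInMeasure μ f atTop 0 := by
  refine tendstoInMeasure_of_tendsto_eLpNorm one_ne_zero (fun n => (hf n).1)
    aestronglyMeasurable_const ?_
  have hL1 : ∀ n, eLpNorm (f n - 0) 1 μ = ENNReal.ofReal (∫ x, f n x ∂μ) := fun n => by
    rw [sub_zero, ofReal_integral_eq_lintegral_ofReal (hf n) (hf0 n),
      eLpNorm_one_eq_lintegral_enorm]
    exact lintegral_congr_ae ((hf0 n).mono fun x hx => Real.enorm_eq_ofReal hx)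
  simpa only [hL1, ENNReal.ofReal_zero] using ENNReal.tendsto_ofReal h

variable {γ : ℝ} {f g : α → ℝ}

theorem MeasureTheory.MemLp.integrable_rpow_of_nonneg (hγ : 0 < γ) (hf0 : 0 ≤ᵐ[μ] f)
    (hf : MemLp f (ENNReal.ofReal γ) μ) : Integrable (fun x => f x ^ γ) μ := by
  have h := hf.norm_rpow (by simpa using hγ) ENNReal.ofReal_ne_top
  rw [ENNReal.toReal_ofReal hγ.le, memLp_one_iff_integrable] at h
  exact h.congr (hf0.mono fun x hx => by simp only [Real.norm_eq_abs, abs_of_nonneg hx])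

theorem MeasureTheory.MemLp.rpow_sub_one_of_nonneg (hγ : 1 < γ) (hf0 : 0 ≤ᵐ[μ] f)
    (hf : MemLp f (ENNReal.ofReal γ) μ) :
    MemLp (fun x => f x ^ (γ - 1)) (ENNReal.ofReal (γ / (γ - 1))) μ := by
  have h := hf.norm_rpow_div (ENNReal.ofReal (γ - 1))
  rw [ENNReal.toReal_ofReal (by linarith), ← ENNReal.ofReal_div_of_pos (by linarith)] at h
  exact h.ae_eq (hf0.mono fun x hx => by rw [Real.norm_eq_abs, abs_of_nonneg hx])

theorem eLpNorm_ofReal_eq_integral_rpow (hγ : 0 < γ) (hf0 : 0 ≤ᵐ[μ] f)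
    (hf : MemLp f (ENNReal.ofReal γ) μ) :
    eLpNorm f (ENNReal.ofReal γ) μ = ENNReal.ofReal ((∫ x, f x ^ γ ∂μ) ^ γ⁻¹) := by
  rw [hf.eLpNorm_eq_integral_rpow_norm (by simpa using hγ) ENNReal.ofReal_ne_top,
    ENNReal.toReal_ofReal hγ.le]
  congr 2
  exact integral_congr_ae (hf0.mono fun x hx => by simp only [Real.norm_eq_abs, abs_of_nonneg hx])

theorem tendsto_eLpNorm_of_tendsto_integral_rpow (hγ : 0 < γ) {f : ℕ → α → ℝ}
    (hf0 : ∀ n, 0 ≤ᵐ[μ] f n) (hg0 : 0 ≤ᵐ[μ] g) (hf : ∀ n, MemLp (f n) (ENNReal.ofReal γ) μ)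
    (hg : MemLp g (ENNReal.ofReal γ) μ)
    (h : Tendsto (fun n => ∫ x, f n x ^ γ ∂μ) atTop (𝓝 (∫ x, g x ^ γ ∂μ))) :
    Tendsto (fun n => eLpNorm (f n) (ENNReal.ofReal γ) μ) atTop
      (𝓝 (eLpNorm g (ENNReal.ofReal γ) μ)) := by
  simp only [eLpNorm_ofReal_eq_integral_rpow hγ (hf0 _) (hf _),
    eLpNorm_ofReal_eq_integral_rpow hγ hg0 hg]
  exact ENNReal.tendsto_ofReal (h.rpow_const (Or.inr (inv_pos.2 hγ).le))

theorem integrable_rpowBregman (hγ : 1 < γ) (hf0 : 0 ≤ᵐ[μ] f) (hg0 : 0 ≤ᵐ[μ] g)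
    (hf : MemLp f (ENNReal.ofReal γ) μ) (hg : MemLp g (ENNReal.ofReal γ) μ) :
    Integrable (fun x => rpowBregman γ (g x) (f x)) μ := by
  have : ENNReal.HolderConjugate (ENNReal.ofReal γ) (ENNReal.ofReal (γ / (γ - 1))) :=
    (Real.HolderConjugate.conjExponent hγ).ennrealOfReal
  have hg' := hg.rpow_sub_one_of_nonneg hγ hg0
  simp only [rpowBregman_eq]
  exact ((hf.integrable_rpow_of_nonneg (by linarith) hf0).sub
    (hg.integrable_rpow_of_nonneg (by linarith) hg0)).sub
    (((hf.integrable_mul hg').sub (hg.integrable_mul hg')).const_mul γ)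

theorem integral_rpowBregman (hγ : 1 < γ) (hf0 : 0 ≤ᵐ[μ] f) (hg0 : 0 ≤ᵐ[μ] g)
    (hf : MemLp f (ENNReal.ofReal γ) μ) (hg : MemLp g (ENNReal.ofReal γ) μ) :
    ∫ x, rpowBregman γ (g x) (f x) ∂μ =
    ∫ x, f x ^ γ ∂μ - ∫ x, g x ^ γ ∂μ -
      γ * (∫ x, f x * g x ^ (γ - 1) ∂μ - ∫ x, g x * g x ^ (γ - 1) ∂μ) := by
  have : ENNReal.HolderConjugate (ENNReal.ofReal γ) (ENNReal.ofReal (γ / (γ - 1))) :=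
    (Real.HolderConjugate.conjExponent hγ).ennrealOfReal
  have hg' := hg.rpow_sub_one_of_nonneg hγ hg0
  have hfγ : Integrable (fun x => f x ^ γ) μ := hf.integrable_rpow_of_nonneg (by linarith) hf0
  have hgγ : Integrable (fun x => g x ^ γ) μ := hg.integrable_rpow_of_nonneg (by linarith) hg0
  have hfg : Integrable (fun x => f x * g x ^ (γ - 1)) μ := hf.integrable_mul hg'
  have hgg : Integrable (fun x => g x * g x ^ (γ - 1)) μ := hg.integrable_mul hg'
  simp only [rpowBregman_eq]
  rw [integral_sub, integral_sub hfγ hgγ, integral_const_mul, integral_sub hfg hgg]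
  exacts [hfγ.sub hgγ, (hfg.sub hgg).const_mul γ]

theorem tendsto_integral_rpowBregman (hγ : 1 < γ) {f : ℕ → α → ℝ} (hf0 : ∀ n, 0 ≤ᵐ[μ] f n)
    (hg0 : 0 ≤ᵐ[μ] g) (hf : ∀ n, MemLp (f n) (ENNReal.ofReal γ) μ)
    (hg : MemLp g (ENNReal.ofReal γ) μ)
    (hpow : Tendsto (fun n => ∫ x, f n x ^ γ ∂μ) atTop (𝓝 (∫ x, g x ^ γ ∂μ)))
    (hcross : Tendsto (fun n => ∫ x, f n x * g x ^ (γ - 1) ∂μ) atTop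
      (𝓝 (∫ x, g x * g x ^ (γ - 1) ∂μ))) :
    Tendsto (fun n => ∫ x, rpowBregman γ (g x) (f n x) ∂μ) atTop (𝓝 0) := by
  simp only [integral_rpowBregman hγ (hf0 _) hg0 (hf _) hg]
  simpa using (hpow.sub_const (∫ x, g x ^ γ ∂μ)).sub
    ((hcross.sub_const (∫ x, g x * g x ^ (γ - 1) ∂μ)).const_mul γ)

theorem tendstoInMeasure_of_tendsto_integral_rpowBregman [IsFiniteMeasure μ] (hγ : 1 < γ)
    {f : ℕ → α → ℝ} (hf0 : ∀ n, 0 ≤ᵐ[μ] f n) (hg0 : 0 ≤ᵐ[μ] g)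
    (hf : ∀ n, MemLp (f n) (ENNReal.ofReal γ) μ) (hg : MemLp g (ENNReal.ofReal γ) μ)
    (h : Tendsto (fun n => ∫ x, rpowBregman γ (g x) (f n x) ∂μ) atTop (𝓝 0)) :
    TendstoInMeasure μ f atTop g := by
  have hbreg : TendstoInMeasure μ (fun n x => rpowBregman γ (g x) (f n x)) atTop 0 :=
    tendstoInMeasure_zero_of_tendsto_integral
      (fun n => (hf0 n).mp (hg0.mono fun x hgx hfx => rpowBregman_nonneg hγ hgx hfx))
      (fun n => integrable_rpowBregman hγ (hf0 n) hg0 (hf n) hg) h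
  refine (exists_seq_tendstoInMeasure_atTop_iff fun n => (hf n).1).2 fun ns hns => ?_
  obtain ⟨ms, hms, hae⟩ := (hbreg.comp hns.tendsto_atTop).exists_seq_tendsto_ae
  refine ⟨ms, hms, ?_⟩
  filter_upwards [hae, ae_all_iff.2 hf0, hg0] with x hx hfx hgx
  exact tendsto_of_tendsto_rpowBregman hγ hgx (fun i => hfx _) hx

end Measure

/-- If `ρ_n ≥ 0` converges weakly in `L^γ` to `ρ` on a finite measure space and the
integrals of the strictly convex function `P(ρ) = (a/(γ−1))ρ^γ` converge,
`∫ P(ρ_n) → ∫ P(ρ)`, then `ρ_n → ρ` strongly in `L^γ`. -/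
theorem strong_Lgamma_convergence_of_convex_integrals
    {X : Type*} [MeasurableSpace X] (μ : Measure X) [IsFiniteMeasure μ]
    (a γ : ℝ) (ha : 0 < a) (hγ : 1 < γ)
    (ρn : ℕ → X → ℝ) (ρ : X → ℝ)
    (hnonneg : ∀ n, 0 ≤ᵐ[μ] ρn n)
    (hmemn : ∀ n, MemLp (ρn n) (ENNReal.ofReal γ) μ)
    (hmem : MemLp ρ (ENNReal.ofReal γ) μ)
    (hweak : ∀ g : X → ℝ, MemLp g (ENNReal.ofReal (γ / (γ - 1))) μ →
      Tendsto (fun n => ∫ x, ρn n x * g x ∂μ) atTop (nhds (∫ x, ρ x * g x ∂μ)))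
    (hP : Tendsto (fun n => ∫ x, a / (γ - 1) * ρn n x ^ γ ∂μ) atTop
      (nhds (∫ x, a / (γ - 1) * ρ x ^ γ ∂μ))) :
    Tendsto (fun n => eLpNorm (ρn n - ρ) (ENNReal.ofReal γ) μ) atTop (nhds 0) := by
  have hγ0 : 0 < γ := by linarith
  have hρ0 : 0 ≤ᵐ[μ] ρ := by
    refine ae_nonneg_of_tendsto_setIntegral hnonneg (hmem.integrable (by simpa using hγ.le))
      fun s hs _ => ?_
    simpa only [integral_mul_indicator_one hs] using
      hweak (s.indicator 1) (memLp_indicator_const _ hs 1 (Or.inr (measure_ne_top μ s)))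
  have hpow : Tendsto (fun n => ∫ x, ρn n x ^ γ ∂μ) atTop (𝓝 (∫ x, ρ x ^ γ ∂μ)) := by
    have hc : a / (γ - 1) ≠ 0 := (div_pos ha (by linarith)).ne'
    simpa only [integral_const_mul, inv_mul_cancel_left₀ hc] using hP.const_mul (a / (γ - 1))⁻¹
  have hconv : TendstoInMeasure μ ρn atTop ρ :=
    tendstoInMeasure_of_tendsto_integral_rpowBregman hγ hnonneg hρ0 hmemn hmem
      (tendsto_integral_rpowBregman hγ hnonneg hρ0 hmemn hmem hpow
        (hweak _ (hmem.rpow_sub_one_of_nonneg hγ hρ0)))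
  exact tendsto_eLpNorm_sub_of_tendstoInMeasure_of_tendsto_eLpNorm (by simpa using hγ0)
    ENNReal.ofReal_ne_top (fun n => (hmemn n).1) hmem hconv
    (tendsto_eLpNorm_of_tendsto_integral_rpow hγ0 hnonneg hρ0 hmemn hmem hpow)
end
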